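/- arXiv:math/0610315 — 9 statements merged into one kernel-verified Lean document; each statement's English description precedes it below -/
import Mathlib

section
/- Let i ≠ j be indices in {1, …, 2g+2} and let p ∈ K satisfy the exact normalization p^{2g} = −f'(α_j)/f'(α_i) (such a p is a symmetric ratio for (i,j)). Then the product of the associated symmetric roots equals 1: ∏_{k ≠ i,j} ℓ_{ijk} = 1. Consequently the polynomial F_{ij}(X) = X·∏_{k ≠ i,j}(X − ℓ_{ijk}) ∈ K[X] is monic of degree 2g+1 with constant term 0 and coefficient of X equal to 1. -/
open Finset Polynomial

set_option maxRecDepth 8000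

/-- With the exact normalization `p ^ (2g) = -f'(α j)/f'(α i)`, the product of
the symmetric roots `ℓ k` over `k ≠ i, j` equals `1`; consequently the symmetric model
`F(X) = X · ∏_{k ≠ i,j} (X - ℓ k)` is monic of degree `2g+1`, with constant term `0` and
coefficient of `X` equal to `1`. -/
theorem symmetric_roots_product_one
    (g : ℕ) (hg : 1 ≤ g) (K : Type*) [Field K]
    (α : Fin (2*g+2) → K) (hα : Function.Injective α)
    (d : Fin (2*g+2) → K)
    (hd : ∀ m, d m = ∏ n ∈ univ.erase m, (α m - α n))
    (i j : Fin (2*g+2)) (hij : i ≠ j)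
    (p : K) (hp : p ^ (2*g) = -(d j / d i))
    (ℓ : Fin (2*g+2) → K)
    (hℓ : ∀ k, ℓ k = p * (α i - α k) / (α j - α k))
    (P : Polynomial K)
    (hP : P = X * ∏ k ∈ univ \ {i, j}, (X - C (ℓ k))) :
    (∏ k ∈ univ \ {i, j}, ℓ k) = 1 ∧
    P.Monic ∧ P.natDegree = 2*g+1 ∧ P.coeff 0 = 0 ∧ P.coeff 1 = 1 := by
  classical
  set s : Finset (Fin (2*g+2)) := univ \ {i, j} with hs
  have hmem : ∀ k, k ∈ s ↔ k ≠ i ∧ k ≠ j := by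
    intro k; simp [hs]
  have hcard : s.card = 2*g := by
    have h2 : ({i, j} : Finset (Fin (2*g+2))).card = 2 := by
      rw [card_insert_of_notMem (by simpa using hij), card_singleton]
    rw [hs, card_sdiff_of_subset (subset_univ _), card_univ, Fintype.card_fin, h2]
    omega
  have hij' : α i - α j ≠ 0 := sub_ne_zero.2 fun h => hij (hα h)
  have hAne : (∏ k ∈ s, (α i - α k)) ≠ 0 :=
    prod_ne_zero_iff.2 fun k hk =>
      sub_ne_zero.2 fun h => ((hmem k).1 hk).1 (hα h).symm
  have hBne : (∏ k ∈ s, (α j - α k)) ≠ 0 :=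
    prod_ne_zero_iff.2 fun k hk =>
      sub_ne_zero.2 fun h => ((hmem k).1 hk).2 (hα h).symm
  have hins_j : univ.erase i = insert j s := by
    ext k
    simp only [mem_erase, mem_univ, and_true, mem_insert, hmem]
    constructor
    · intro h
      by_cases hk : k = j
      · exact Or.inl hk
      · exact Or.inr ⟨h, hk⟩
    · rintro (rfl | ⟨h, _⟩)
      · exact hij.symm
      · exact h
  have hins_i : univ.erase j = insert i s := by
    ext k
    simp only [mem_erase, mem_univ, and_true, mem_insert, hmem]
    constructor
    · intro h
      by_cases hk : k = i
      · exact Or.inl hk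
      · exact Or.inr ⟨hk, h⟩
    · rintro (rfl | ⟨_, h⟩)
      · exact hij
      · exact h
  have hjs : j ∉ s := by simp [hmem]
  have his : i ∉ s := by simp [hmem]
  have hdi : d i = (α i - α j) * ∏ k ∈ s, (α i - α k) := by
    rw [hd i, hins_j, prod_insert hjs]
  have hdj : d j = (α j - α i) * ∏ k ∈ s, (α j - α k) := by
    rw [hd j, hins_i, prod_insert his]
  have hprod : (∏ k ∈ s, ℓ k) = 1 := by
    have key : ∏ k ∈ s, ℓ k
        = p ^ s.card * (∏ k ∈ s, (α i - α k)) / (∏ k ∈ s, (α j - α k)) := by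
      simp only [hℓ]
      rw [prod_div_distrib, prod_mul_distrib, prod_const]
    rw [key, hcard, hp, hdi, hdj]
    field_simp
    ring
  refine ⟨hprod, ?_, ?_, ?_, ?_⟩
  · rw [hP]
    exact monic_X.mul (monic_prod_of_monic _ _ fun k _ => monic_X_sub_C _)
  · rw [hP]
    have hQ : (∏ k ∈ s, (X - C (ℓ k))).natDegree = 2*g := by
      rw [natDegree_prod_of_monic _ _ fun k _ => monic_X_sub_C _]
      simp [hcard]
    rw [natDegree_mul X_ne_zero (monic_prod_of_monic _ _
      fun k _ => monic_X_sub_C (ℓ k)).ne_zero, natDegree_X, hQ]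
    omega
  · rw [hP]
    simp [mul_coeff_zero]
  · rw [hP]
    show (X * ∏ k ∈ s, (X - C (ℓ k))).coeff (0 + 1) = 1
    rw [coeff_X_mul, coeff_zero_eq_eval_zero, eval_prod]
    simp only [eval_sub, eval_X, eval_C, zero_sub]
    rw [prod_congr rfl (fun k _ => (neg_one_mul (ℓ k)).symm), prod_mul_distrib,
      prod_const, hcard, hprod, mul_one, pow_mul]
    simp
end

section
/- Let i, j, r, s be pairwise distinct indices in {1, …, 2g+2}, and choose symmetric ratios for (i,j), for (s,j) and for (s,i), with associated symmetric roots ℓ_{ijk}, ℓ_{sjk}, ℓ_{sik}. Then ℓ_{ijr}^{4g} = ( (ℓ_{sji} − ℓ_{sjr}) / ℓ_{sij} )^{4g}; that is, ℓ_{ijr} = (ℓ_{sji} − ℓ_{sjr})/ℓ_{sij} up to a 4g-th root of unity, independently of the choices of symmetric ratios. -/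
/-!
Writing `t = (α_i - α_r)/(α_j - α_r)`, one has `ℓ_{ijr} = p_{ij} t`, while a direct computation
gives `(ℓ_{sji} - ℓ_{sjr})/ℓ_{sij} = -(p_{sj}/p_{si}) t`. Since `4g` is even, the two sides
agree after raising to the `4g`-th power because `(p_{sj}/p_{si})^{4g} = (f'(α_j)/f'(α_i))² = p_{ij}^{4g}`:
the factor `f'(α_s)` cancels.
-/

open Finset

theorem prod_erase_sub_ne_zero {ι K : Type*} [Fintype ι] [DecidableEq ι] [Field K]
    {α : ι → K} (hα : Function.Injective α) (m : ι) :
    ∏ n ∈ univ.erase m, (α m - α n) ≠ 0 :=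
  prod_ne_zero_iff.mpr fun _ hn => sub_ne_zero.mpr (hα.ne (ne_of_mem_erase hn).symm)

-- Also valid for `p = 0`: both sides are then `0`, as `x / 0 = 0`.
theorem symmetricRoot_sub_div_symmetricRoot {K : Type*} [Field K] (p q ai aj ar as : K)
    (hji : aj ≠ ai) (hjr : aj ≠ ar) (hsj : as ≠ aj) :
    (q * (as - ai) / (aj - ai) - q * (as - ar) / (aj - ar)) / (p * (as - aj) / (ai - aj)) =
      -(q / p) * ((ai - ar) / (aj - ar)) := by
  have := sub_ne_zero.mpr hji
  have := sub_ne_zero.mpr hji.symm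
  have := sub_ne_zero.mpr hjr
  have := sub_ne_zero.mpr hsj
  field_simp
  ring

theorem div_pow_eq_sq_of_pow_eq_sq_div {K : Type*} [Field K] {n : ℕ} {p q x y z : K}
    (hp : p ^ n = (x / z) ^ 2) (hq : q ^ n = (y / z) ^ 2) (hz : z ≠ 0) :
    (p / q) ^ n = (x / y) ^ 2 := by
  rw [div_pow, hp, hq, ← div_pow, div_div_div_cancel_right₀ hz]

theorem symmetric_roots_relation_d_general
    (g : ℕ) (K : Type*) [Field K]
    (α : Fin (2*g+2) → K) (hα : Function.Injective α)
    (d : Fin (2*g+2) → K)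
    (hd : ∀ m, d m = ∏ n ∈ univ.erase m, (α m - α n))
    (i j r s : Fin (2*g+2))
    (hij : i ≠ j) (hjr : j ≠ r) (hjs : j ≠ s)
    (pij : K) (hpij : pij ^ (4*g) = (d j / d i) ^ 2)
    (ℓij : Fin (2*g+2) → K)
    (hℓij : ∀ k, ℓij k = pij * (α i - α k) / (α j - α k))
    (psj : K) (hpsj : psj ^ (4*g) = (d j / d s) ^ 2)
    (ℓsj : Fin (2*g+2) → K)
    (hℓsj : ∀ k, ℓsj k = psj * (α s - α k) / (α j - α k))
    (psi : K) (hpsi : psi ^ (4*g) = (d i / d s) ^ 2)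
    (ℓsi : Fin (2*g+2) → K)
    (hℓsi : ∀ k, ℓsi k = psi * (α s - α k) / (α i - α k)) :
    (ℓij r) ^ (4*g) = ((ℓsj i - ℓsj r) / ℓsi j) ^ (4*g) := by
  have hratio : (psj / psi) ^ (4*g) = (d j / d i) ^ 2 :=
    div_pow_eq_sq_of_pow_eq_sq_div hpsj hpsi (hd s ▸ prod_erase_sub_ne_zero hα s)
  have heven : Even (4*g) := ⟨2*g, by ring⟩
  rw [hℓsj, hℓsj, hℓsi, symmetricRoot_sub_div_symmetricRoot _ _ _ _ _ _ (hα.ne hij.symm)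
    (hα.ne hjr) (hα.ne hjs.symm), neg_mul, heven.neg_pow, mul_pow, hratio, ← hpij, ← mul_pow, hℓij,
    mul_div_assoc]

/-- For pairwise distinct `i, j, r, s` and any choices of symmetric ratios for
`(i,j)`, `(s,j)` and `(s,i)`, the associated symmetric roots satisfy
`ℓ_{ijr}^{4g} = ((ℓ_{sji} − ℓ_{sjr})/ℓ_{sij})^{4g}`, i.e. the relation
`ℓ_{ijr} = (ℓ_{sji} − ℓ_{sjr})/ℓ_{sij}` holds up to a `4g`-th root of unity, independently
of the choices of symmetric ratios. -/
theorem symmetric_roots_relation_d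
    (g : ℕ) (hg : 1 ≤ g) (K : Type*) [Field K]
    (α : Fin (2*g+2) → K) (hα : Function.Injective α)
    (d : Fin (2*g+2) → K)
    (hd : ∀ m, d m = ∏ n ∈ univ.erase m, (α m - α n))
    (i j r s : Fin (2*g+2))
    (hij : i ≠ j) (hir : i ≠ r) (his : i ≠ s) (hjr : j ≠ r) (hjs : j ≠ s) (hrs : r ≠ s)
    (pij : K) (hpij : pij ^ (4*g) = (d j / d i) ^ 2)
    (ℓij : Fin (2*g+2) → K)
    (hℓij : ∀ k, ℓij k = pij * (α i - α k) / (α j - α k))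
    (psj : K) (hpsj : psj ^ (4*g) = (d j / d s) ^ 2)
    (ℓsj : Fin (2*g+2) → K)
    (hℓsj : ∀ k, ℓsj k = psj * (α s - α k) / (α j - α k))
    (psi : K) (hpsi : psi ^ (4*g) = (d i / d s) ^ 2)
    (ℓsi : Fin (2*g+2) → K)
    (hℓsi : ∀ k, ℓsi k = psi * (α s - α k) / (α i - α k)) :
    (ℓij r) ^ (4*g) = ((ℓsj i - ℓsj r) / ℓsi j) ^ (4*g) :=
  symmetric_roots_relation_d_general g K α hα d hd i j r s hij hjr hjs pij hpij ℓij hℓij psj hpsj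
    ℓsj hℓsj psi hpsi ℓsi hℓsi
end

section
/- Let i ≠ j be indices in {1, …, 2g+2}, let p be any symmetric ratio for (i,j), and let D_{ij} be the associated symmetric discriminant. Then D_{ij}² = ( (α_i − α_j)^{2g(2g+1)} · Δ(f) )² / ( f'(α_i)·f'(α_j) )^{2(2g+1)}; equivalently, D_{ij} = ± (α_i − α_j)^{2g(2g+1)} Δ(f) / ( f'(α_i)^{2g+1} f'(α_j)^{2g+1} ). -/
open Finset

private lemma offdiag_swap {I M : Type*} [DecidableEq I] [CommMonoid M]
    (S : Finset I) (f : I → I → M) :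
    ∏ k ∈ S, ∏ k' ∈ S.erase k, f k k' = ∏ k ∈ S, ∏ k' ∈ S.erase k, f k' k := by
  rw [Finset.prod_comm' (t' := S) (s' := fun k' => S.erase k')
    (fun x y => by
      simp only [Finset.mem_erase]
      constructor
      · rintro ⟨hx, hy, hyS⟩; exact ⟨⟨Ne.symm hy, hx⟩, hyS⟩
      · rintro ⟨⟨hxy, hxS⟩, hyS⟩; exact ⟨hxS, hxy.symm, hyS⟩)]

private lemma sq_lt_prod {I M : Type*} [LinearOrder I] [DecidableEq I] [CommMonoid M]
    (S : Finset I) (f : I → I → M) (hf : ∀ a b, f a b = f b a) :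
    (∏ k ∈ S, ∏ k' ∈ S.filter (fun k' => k < k'), f k k') ^ 2
      = ∏ k ∈ S, ∏ k' ∈ S.erase k, f k k' := by
  have hsplit : ∀ k ∈ S,
      ∏ k' ∈ S.erase k, f k k'
        = (∏ k' ∈ S.filter (fun k' => k < k'), f k k') *
          ∏ k' ∈ S.filter (fun k' => k' < k), f k k' := by
    intro k hk
    rw [← Finset.prod_union (by
      simp only [Finset.disjoint_left, Finset.mem_filter]
      rintro a ⟨-, h1⟩ ⟨-, h2⟩
      exact absurd h2 (lt_asymm h1))]
    apply Finset.prod_congr _ fun _ _ => rfl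
    ext a
    simp only [Finset.mem_erase, Finset.mem_union, Finset.mem_filter]
    constructor
    · rintro ⟨hne, ha⟩
      rcases lt_or_gt_of_ne (Ne.symm hne) with h | h
      · exact Or.inl ⟨ha, h⟩
      · exact Or.inr ⟨ha, h⟩
    · rintro (⟨ha, h⟩ | ⟨ha, h⟩)
      · exact ⟨h.ne', ha⟩
      · exact ⟨h.ne, ha⟩
  rw [Finset.prod_congr rfl hsplit, Finset.prod_mul_distrib]
  have hswap : (∏ k ∈ S, ∏ k' ∈ S.filter (fun k' => k' < k), f k k')
      = ∏ k ∈ S, ∏ k' ∈ S.filter (fun k' => k < k'), f k k' := by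
    rw [Finset.prod_comm' (t' := S) (s' := fun k' => S.filter (fun k => k' < k))
      (fun x y => by simp only [Finset.mem_filter]; tauto)]
    exact Finset.prod_congr rfl fun a _ => Finset.prod_congr rfl fun b _ => hf b a
  rw [hswap, sq]

private lemma offdiag_split {I M : Type*} [DecidableEq I] [CommMonoid M]
    (T : Finset I) (a : I) (ha : a ∈ T) (f : I → I → M) :
    ∏ r ∈ T, ∏ s ∈ T.erase r, f r s
      = (∏ s ∈ T.erase a, f a s) * ((∏ r ∈ T.erase a, f r a) *
        ∏ r ∈ T.erase a, ∏ s ∈ (T.erase a).erase r, f r s) := by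
  rw [← Finset.mul_prod_erase T _ ha]
  congr 1
  rw [← Finset.prod_mul_distrib]
  apply Finset.prod_congr rfl
  intro r hr
  have hra : r ≠ a := (Finset.mem_erase.mp hr).1
  have har : a ∈ T.erase r := Finset.mem_erase.mpr ⟨Ne.symm hra, ha⟩
  rw [← Finset.mul_prod_erase _ _ har, Finset.erase_right_comm]

set_option maxHeartbeats 2000000 in
/-- For any symmetric ratio `p` for `(i,j)`, the associated symmetric
discriminant satisfies
`D_{ij}² = ((α i − α j)^{2g(2g+1)} · Δ(f))² / (f'(α i)·f'(α j))^{2(2g+1)}`, i.e.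
`D_{ij} = ± (α i − α j)^{2g(2g+1)} Δ(f) / (f'(α i)^{2g+1} f'(α j)^{2g+1})`. -/
theorem symmetric_discriminant_formula
    (g : ℕ) (hg : 1 ≤ g) (K : Type*) [Field K]
    (α : Fin (2*g+2) → K) (hα : Function.Injective α)
    (d : Fin (2*g+2) → K)
    (hd : ∀ m, d m = ∏ n ∈ univ.erase m, (α m - α n))
    (Δ : K)
    (hΔ : Δ = ∏ r : Fin (2*g+2), ∏ s ∈ univ.filter (fun s => r < s), (α r - α s) ^ 2)
    (i j : Fin (2*g+2)) (hij : i ≠ j)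
    (p : K) (hp : p ^ (4*g) = (d j / d i) ^ 2)
    (ℓ : Fin (2*g+2) → K)
    (hℓ : ∀ k, ℓ k = p * (α i - α k) / (α j - α k))
    (D : K)
    (hD : D = (∏ k ∈ univ \ {i, j}, ℓ k) ^ 2 *
      ∏ k ∈ univ \ {i, j}, ∏ k' ∈ (univ \ {i, j}).filter (fun k' => k < k'), (ℓ k - ℓ k') ^ 2) :
    D ^ 2 = ((α i - α j) ^ (2*g*(2*g+1)) * Δ) ^ 2 / (d i * d j) ^ (2*(2*g+1)) := by
  have hne : ∀ a b : Fin (2*g+2), a ≠ b → α a - α b ≠ 0 := fun a b h =>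
    sub_ne_zero.mpr fun hh => h (hα hh)
  obtain ⟨c, hc⟩ : ∃ c, 2*g = c + 1 := ⟨2*g - 1, by omega⟩
  set S : Finset (Fin (2*g+2)) := univ \ {i, j} with hS
  have hmemS : ∀ k, k ∈ S ↔ k ≠ i ∧ k ≠ j := by
    intro k; rw [hS]; simp [not_or]
  have hScard : S.card = c + 1 := by
    rw [hS, Finset.card_sdiff_of_subset (Finset.subset_univ _), Finset.card_univ, Fintype.card_fin,
      Finset.card_insert_of_notMem (by simp [hij]), Finset.card_singleton]
    omega
  have hjmem : j ∈ Finset.univ.erase i := Finset.mem_erase.mpr ⟨hij.symm, Finset.mem_univ j⟩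
  have himem : i ∈ Finset.univ.erase j := Finset.mem_erase.mpr ⟨hij, Finset.mem_univ i⟩
  have hSi : S = (Finset.univ.erase i).erase j := by
    rw [hS]; ext k
    simp only [Finset.mem_sdiff, Finset.mem_univ, Finset.mem_insert, Finset.mem_singleton,
      Finset.mem_erase, true_and, and_true, not_or]
    tauto
  have hSj : S = (Finset.univ.erase j).erase i := by
    rw [hS]; ext k
    simp only [Finset.mem_sdiff, Finset.mem_univ, Finset.mem_insert, Finset.mem_singleton,
      Finset.mem_erase, true_and, and_true, not_or]
  have hA0 : (∏ k ∈ S, (α i - α k)) ≠ 0 :=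
    Finset.prod_ne_zero_iff.mpr fun k hk => hne i k (Ne.symm ((hmemS k).1 hk).1)
  have hB0 : (∏ k ∈ S, (α j - α k)) ≠ 0 :=
    Finset.prod_ne_zero_iff.mpr fun k hk => hne j k (Ne.symm ((hmemS k).1 hk).2)
  have he0 : α i - α j ≠ 0 := hne i j hij
  have hdiA : d i = (α i - α j) * ∏ k ∈ S, (α i - α k) := by
    rw [hd i, ← Finset.mul_prod_erase (Finset.univ.erase i) _ hjmem, ← hSi]
  have hdjB : d j = (α j - α i) * ∏ k ∈ S, (α j - α k) := by
    rw [hd j, ← Finset.mul_prod_erase (Finset.univ.erase j) _ himem, ← hSj]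
  have hdi0 : d i ≠ 0 := by rw [hdiA]; exact mul_ne_zero he0 hA0
  have hdj0 : d j ≠ 0 := by rw [hdjB]; exact mul_ne_zero (hne j i hij.symm) hB0
  have hp2 : p ^ (2*(c+1)) * (∏ k ∈ S, (α i - α k))^2 = (∏ k ∈ S, (α j - α k))^2 := by
    have h4 : 4*g = 2*(c+1) := by omega
    rw [← h4, hp, hdiA, hdjB]
    field_simp
    ring
  -- pointwise formula for differences of symmetric roots
  have hpt : ∀ k ∈ S, ∀ k' ∈ S.erase k,
      (ℓ k - ℓ k')^2 = (p*(α i - α j))^2 * (α k - α k')^2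
        / ((α j - α k)^2 * (α j - α k')^2) := by
    intro k hk k' hk'
    have hk'S : k' ∈ S := Finset.mem_of_mem_erase hk'
    have h1 : α j - α k ≠ 0 := hne j k (Ne.symm ((hmemS k).1 hk).2)
    have h2 : α j - α k' ≠ 0 := hne j k' (Ne.symm ((hmemS k').1 hk'S).2)
    rw [hℓ k, hℓ k']
    field_simp
    ring
  have hconst : ∀ x : K, (∏ k ∈ S, ∏ _k' ∈ S.erase k, x) = x ^ (c*(c+1)) := by
    intro x
    rw [Finset.prod_congr rfl (fun k hk => by
      rw [Finset.prod_const, Finset.card_erase_of_mem hk, hScard, Nat.add_sub_cancel]),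
      Finset.prod_const, hScard, ← pow_mul]
  have hBk : (∏ k ∈ S, ∏ _k' ∈ S.erase k, (α j - α k)^2)
      = ((∏ k ∈ S, (α j - α k))^2)^c := by
    rw [Finset.prod_congr rfl (fun k hk => by
      rw [Finset.prod_const, Finset.card_erase_of_mem hk, hScard, Nat.add_sub_cancel]),
      ← Finset.prod_pow, Finset.prod_pow]
  have hBk' : (∏ k ∈ S, ∏ k' ∈ S.erase k, (α j - α k')^2)
      = ((∏ k ∈ S, (α j - α k))^2)^c := by
    rw [offdiag_swap S (fun k k' => (α j - α k')^2)]
    exact hBk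
  have hQ2 : (∏ k ∈ S, ∏ k' ∈ S.filter (fun k' => k < k'), (ℓ k - ℓ k')^2)^2
      = ((p*(α i - α j))^2)^(c*(c+1)) * (∏ k ∈ S, ∏ k' ∈ S.erase k, (α k - α k')^2)
        / (((∏ k ∈ S, (α j - α k))^2)^c * ((∏ k ∈ S, (α j - α k))^2)^c) := by
    calc (∏ k ∈ S, ∏ k' ∈ S.filter (fun k' => k < k'), (ℓ k - ℓ k')^2)^2
        = ∏ k ∈ S, ∏ k' ∈ S.erase k, (ℓ k - ℓ k')^2 :=
          sq_lt_prod S (fun k k' => (ℓ k - ℓ k')^2) (fun a b => by ring)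
      _ = ∏ k ∈ S, ∏ k' ∈ S.erase k,
            ((p*(α i - α j))^2 * (α k - α k')^2 / ((α j - α k)^2 * (α j - α k')^2)) :=
          Finset.prod_congr rfl (fun k hk =>
            Finset.prod_congr rfl (fun k' hk' => hpt k hk k' hk'))
      _ = ((p*(α i - α j))^2)^(c*(c+1)) * (∏ k ∈ S, ∏ k' ∈ S.erase k, (α k - α k')^2)
            / (((∏ k ∈ S, (α j - α k))^2)^c * ((∏ k ∈ S, (α j - α k))^2)^c) := by
          simp only [Finset.prod_div_distrib, Finset.prod_mul_distrib]
          rw [hconst, hBk, hBk']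
  have hL : (∏ k ∈ S, ℓ k)^2 = 1 := by
    have h1 : ∏ k ∈ S, ℓ k
        = p^(c+1) * (∏ k ∈ S, (α i - α k)) / (∏ k ∈ S, (α j - α k)) := by
      rw [Finset.prod_congr rfl (fun k _ => hℓ k), Finset.prod_div_distrib,
        Finset.prod_mul_distrib, Finset.prod_const, hScard]
    rw [h1, div_pow, mul_pow, ← pow_mul, show (c+1)*2 = 2*(c+1) from by ring, hp2]
    exact div_self (pow_ne_zero 2 hB0)
  have hΔ2 : Δ^2 = ((d i)^2 * (d i)^2) *
      (((∏ k ∈ S, (α j - α k))^2 * (∏ k ∈ S, (α j - α k))^2) *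
        ∏ k ∈ S, ∏ k' ∈ S.erase k, (α k - α k')^2) := by
    have e1 : (∏ s ∈ Finset.univ.erase i, (α i - α s)^2) = (d i)^2 := by
      rw [Finset.prod_pow, ← hd i]
    have e2 : (∏ r ∈ Finset.univ.erase i, (α r - α i)^2) = (d i)^2 := by
      rw [Finset.prod_congr rfl (fun r _ => show (α r - α i)^2 = (α i - α r)^2 from by ring)]
      exact e1
    have e3 : (∏ s ∈ S, (α j - α s)^2) = (∏ k ∈ S, (α j - α k))^2 := Finset.prod_pow _ _ _
    have e4 : (∏ r ∈ S, (α r - α j)^2) = (∏ k ∈ S, (α j - α k))^2 := by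
      rw [Finset.prod_congr rfl (fun r _ => show (α r - α j)^2 = (α j - α r)^2 from by ring)]
      exact e3
    calc Δ^2
        = ∏ r : Fin (2*g+2), ∏ s ∈ Finset.univ.erase r, (α r - α s)^2 := by
          rw [hΔ]
          exact sq_lt_prod Finset.univ (fun r s => (α r - α s)^2) (fun a b => by ring)
      _ = (∏ s ∈ Finset.univ.erase i, (α i - α s)^2) *
          ((∏ r ∈ Finset.univ.erase i, (α r - α i)^2) *
            ∏ r ∈ Finset.univ.erase i, ∏ s ∈ (Finset.univ.erase i).erase r, (α r - α s)^2) :=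
          offdiag_split Finset.univ i (Finset.mem_univ i) (fun r s => (α r - α s)^2)
      _ = (∏ s ∈ Finset.univ.erase i, (α i - α s)^2) *
          (((∏ s ∈ (Finset.univ.erase i).erase j, (α j - α s)^2) *
            ((∏ r ∈ (Finset.univ.erase i).erase j, (α r - α j)^2) *
              ∏ r ∈ (Finset.univ.erase i).erase j,
                ∏ s ∈ ((Finset.univ.erase i).erase j).erase r, (α r - α s)^2)) *
            (∏ r ∈ Finset.univ.erase i, (α r - α i)^2)) := by
          rw [offdiag_split (Finset.univ.erase i) j hjmem (fun r s => (α r - α s)^2)]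
          ring
      _ = ((d i)^2 * (d i)^2) *
            (((∏ k ∈ S, (α j - α k))^2 * (∏ k ∈ S, (α j - α k))^2) *
              ∏ k ∈ S, ∏ k' ∈ S.erase k, (α k - α k')^2) := by
          rw [← hSi, e1, e2, e3, e4]; ring
  have hPB : ((p*(α i - α j))^2)^(c*(c+1))
      = ((∏ k ∈ S, (α j - α k))^2)^c * ((α i - α j)^2)^(c*(c+1))
        / ((∏ k ∈ S, (α i - α k))^2)^c := by
    rw [eq_div_iff (pow_ne_zero c (pow_ne_zero 2 hA0))]
    have key : (p ^ (2*(c+1)))^c * ((∏ k ∈ S, (α i - α k))^2)^c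
        = ((∏ k ∈ S, (α j - α k))^2)^c := by rw [← mul_pow, hp2]
    have expand : ((p*(α i - α j))^2)^(c*(c+1))
        = (p^(2*(c+1)))^c * ((α i - α j)^2)^(c*(c+1)) := by
      rw [mul_pow p (α i - α j) 2, mul_pow, ← pow_mul p 2 (c*(c+1)),
        show 2*(c*(c+1)) = 2*(c+1)*c from by ring, pow_mul p (2*(c+1)) c]
    rw [expand, mul_right_comm, key]
  have hdd : (d i * d j)^(2*(c+2))
      = (((α i - α j) * (α i - α j)) *
          ((∏ k ∈ S, (α i - α k)) * (∏ k ∈ S, (α j - α k))))^(2*(c+2)) := by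
    rw [hdiA, hdjB]
    rw [show ((α i - α j) * ∏ k ∈ S, (α i - α k)) * ((α j - α i) * ∏ k ∈ S, (α j - α k))
        = -((((α i - α j) * (α i - α j)) *
          ((∏ k ∈ S, (α i - α k)) * (∏ k ∈ S, (α j - α k))))) from by ring,
      Even.neg_pow (even_two_mul _)]
  have hzz : (d i * d j)^(2*(2*g+1)) ≠ 0 := pow_ne_zero _ (mul_ne_zero hdi0 hdj0)
  rw [eq_div_iff hzz, hD, hL, one_mul, hQ2,
    show 2*g*(2*g+1) = (c+1)*(c+2) from by rw [hc],
    show 2*(2*g+1) = 2*(c+2) from by rw [hc],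
    hdd, mul_pow ((α i - α j) ^ ((c+1)*(c+2))) Δ 2, hΔ2, hdiA, hPB]
  simp only [mul_pow, ← pow_mul]
  field_simp
  ring
end

section
/- Let i ≠ j be indices in {1, …, 2g+2}. For any choice of a symmetric ratio for (i,j) and any choice of a symmetric ratio for (j,i), the associated symmetric discriminants satisfy D_{ij}² = D_{ji}²; that is, D_{ij} = ±D_{ji}. -/
/-!
Write `ℓ k = ℓ_{ijk}` and `ℓ' k = ℓ_{jik}` for `k ≠ i, j`. Then `ℓ k * ℓ' k = p * q` for every `k`,
and `(∏ ℓ)² = (∏ ℓ')² = 1`, because `∏ (α_i - α_k) / (α_j - α_k) = -f'(α_i) / f'(α_j)` while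
`p^{4g} = (f'(α_j) / f'(α_i))²`. Whenever `u k * x k` does not depend on `k`, one has
`(u k - u k')² x k x k' = u k u k' (x k - x k')²`; multiplying over all pairs, the Vandermonde
factors of `D_{ij}` and `D_{ji}` agree up to the factors `(∏ ℓ)^{2g-1}` and `(∏ ℓ')^{2g-1}`,
whose squares are `1`.
-/

open Finset

section Pairs

variable {ι : Type*} [LinearOrder ι]

lemma card_filter_gt_add_card_filter_lt (S : Finset ι) {k : ι} (hk : k ∈ S) :
    #(S.filter (k < ·)) + #(S.filter (· < k)) = #S - 1 := by
  rw [← card_union_of_disjoint (disjoint_filter.2 fun _ _ h h' => lt_asymm h h'),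
    ← filter_or, ← card_erase_of_mem hk, filter_or]
  congr 1
  ext k'
  simp only [mem_union, mem_filter, mem_erase]
  grind

lemma prod_pairs_mul {M : Type*} [CommMonoid M] (S : Finset ι) (c : ι → M) :
    ∏ k ∈ S, ∏ k' ∈ S.filter (k < ·), c k * c k' = (∏ k ∈ S, c k) ^ (#S - 1) := by
  have hswap : ∏ k ∈ S, ∏ k' ∈ S.filter (k < ·), c k'
      = ∏ k ∈ S, ∏ _k' ∈ S.filter (· < k), c k :=
    prod_comm' fun k k' => by simp only [mem_filter]; tauto
  simp_rw [prod_mul_distrib, prod_const, hswap, prod_const, ← prod_mul_distrib, ← prod_pow]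
  exact prod_congr rfl fun k hk => by rw [← pow_add, card_filter_gt_add_card_filter_lt S hk]

/-- The discriminant of `∏ k ∈ S, (X - x k)`. -/
def finsetDiscr {R : Type*} [CommRing R] (S : Finset ι) (x : ι → R) : R :=
  ∏ k ∈ S, ∏ k' ∈ S.filter (k < ·), (x k - x k') ^ 2

variable {R : Type*} [CommRing R]

lemma sq_sub_mul_mul_eq_mul_mul_sq_sub {u v x y : R} (h : u * x = v * y) :
    (u - v) ^ 2 * (x * y) = u * v * (x - y) ^ 2 := by
  linear_combination (u * y - v * x) * h

lemma finsetDiscr_mul_prod_pow_eq_of_mul_eq (S : Finset ι) {u x : ι → R} {c : R}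
    (h : ∀ k ∈ S, u k * x k = c) :
    finsetDiscr S u * (∏ k ∈ S, x k) ^ (#S - 1)
      = (∏ k ∈ S, u k) ^ (#S - 1) * finsetDiscr S x := by
  rw [finsetDiscr, finsetDiscr, ← prod_pairs_mul, ← prod_pairs_mul, ← prod_mul_distrib,
    ← prod_mul_distrib]
  refine prod_congr rfl fun k hk => ?_
  rw [← prod_mul_distrib, ← prod_mul_distrib]
  refine prod_congr rfl fun k' hk' => ?_
  exact sq_sub_mul_mul_eq_mul_mul_sq_sub <| (h k hk).trans (h k' (mem_filter.1 hk').1).symm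

lemma sq_finsetDiscr_eq_of_mul_eq (S : Finset ι) {u x : ι → R} {c : R}
    (h : ∀ k ∈ S, u k * x k = c) (hu : (∏ k ∈ S, u k) ^ 2 = 1) (hx : (∏ k ∈ S, x k) ^ 2 = 1) :
    finsetDiscr S u ^ 2 = finsetDiscr S x ^ 2 := by
  have hpow : ∀ P : R, P ^ 2 = 1 → (P ^ (#S - 1)) ^ 2 = 1 := fun P hP => by
    rw [← pow_mul, mul_comm, pow_mul, hP, one_pow]
  have key := congrArg (· ^ 2) (finsetDiscr_mul_prod_pow_eq_of_mul_eq S h)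
  rwa [mul_pow, mul_pow, hpow _ hu, hpow _ hx, mul_one, one_mul] at key

end Pairs

section SymmetricRoots

variable {ι : Type*} [Fintype ι] [DecidableEq ι]

lemma prod_erase_eq_mul_prod_sdiff_pair {M : Type*} [CommMonoid M] (f : ι → M) {i j : ι}
    (hij : i ≠ j) : ∏ n ∈ univ.erase i, f n = f j * ∏ n ∈ univ \ {i, j}, f n := by
  rw [← mul_prod_erase _ _ (mem_erase.2 ⟨hij.symm, mem_univ j⟩)]
  congr 2
  ext n
  simp only [mem_erase, mem_sdiff, mem_insert, mem_singleton]
  tauto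

variable {K : Type*} [Field K] {α : ι → K}

lemma sq_prod_symmetricRoots_eq_one (hα : Function.Injective α) {i j : ι} (hij : i ≠ j) {p : K}
    (hp : p ^ (2 * #(univ \ {i, j})) = ((∏ n ∈ univ.erase j, (α j - α n)) /
      ∏ n ∈ univ.erase i, (α i - α n)) ^ 2) :
    (∏ k ∈ univ \ {i, j}, p * (α i - α k) / (α j - α k)) ^ 2 = 1 := by
  have hsub : ∀ {m n}, m ≠ n → α m - α n ≠ 0 := fun h => sub_ne_zero.2 (hα.ne h)
  have hA : ∏ k ∈ univ \ {i, j}, (α i - α k) ≠ 0 :=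
    prod_ne_zero_iff.2 fun k hk => hsub fun h => by simp [← h] at hk
  have hB : ∏ k ∈ univ \ {i, j}, (α j - α k) ≠ 0 :=
    prod_ne_zero_iff.2 fun k hk => hsub fun h => by simp [← h] at hk
  rw [prod_erase_eq_mul_prod_sdiff_pair _ hij.symm, pair_comm j i,
    prod_erase_eq_mul_prod_sdiff_pair _ hij] at hp
  rw [prod_div_distrib, prod_mul_distrib, prod_const, div_pow, mul_pow, ← pow_mul', hp]
  field_simp [hsub hij, hsub hij.symm]
  ring

end SymmetricRoots

theorem symmetric_discriminant_symmetry_general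
    (g : ℕ) (K : Type*) [Field K]
    (α : Fin (2*g+2) → K) (hα : Function.Injective α)
    (d : Fin (2*g+2) → K)
    (hd : ∀ m, d m = ∏ n ∈ univ.erase m, (α m - α n))
    (i j : Fin (2*g+2)) (hij : i ≠ j)
    (p : K) (hp : p ^ (4*g) = (d j / d i) ^ 2)
    (ℓij : Fin (2*g+2) → K)
    (hℓij : ∀ k, ℓij k = p * (α i - α k) / (α j - α k))
    (q : K) (hq : q ^ (4*g) = (d i / d j) ^ 2)
    (ℓji : Fin (2*g+2) → K)
    (hℓji : ∀ k, ℓji k = q * (α j - α k) / (α i - α k))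
    (Dij : K)
    (hDij : Dij = (∏ k ∈ univ \ {i, j}, ℓij k) ^ 2 *
      ∏ k ∈ univ \ {i, j}, ∏ k' ∈ (univ \ {i, j}).filter (fun k' => k < k'),
        (ℓij k - ℓij k') ^ 2)
    (Dji : K)
    (hDji : Dji = (∏ k ∈ univ \ {i, j}, ℓji k) ^ 2 *
      ∏ k ∈ univ \ {i, j}, ∏ k' ∈ (univ \ {i, j}).filter (fun k' => k < k'),
        (ℓji k - ℓji k') ^ 2) :
    Dij ^ 2 = Dji ^ 2 := by
  have hcard : 4 * g = 2 * #(univ \ {i, j}) := by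
    rw [card_sdiff_of_subset (subset_univ _), card_univ, Fintype.card_fin, card_pair hij]
    omega
  simp only [hd, hcard] at hp hq
  have hPij : (∏ k ∈ univ \ {i, j}, ℓij k) ^ 2 = 1 := by
    simpa only [hℓij] using sq_prod_symmetricRoots_eq_one hα hij hp
  have hPji : (∏ k ∈ univ \ {i, j}, ℓji k) ^ 2 = 1 := by
    simpa only [hℓji, pair_comm j i] using
      sq_prod_symmetricRoots_eq_one hα hij.symm (by rwa [pair_comm])
  have hmul : ∀ k ∈ univ \ {i, j}, ℓij k * ℓji k = p * q := fun k hk => by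
    simp only [mem_sdiff, mem_insert, mem_singleton, not_or] at hk
    rw [hℓij, hℓji]
    field_simp [sub_ne_zero.2 (hα.ne hk.2.1).symm, sub_ne_zero.2 (hα.ne hk.2.2).symm]
  rw [hDij, hDji, mul_pow, mul_pow, hPij, hPji, one_pow, one_mul, one_mul]
  exact sq_finsetDiscr_eq_of_mul_eq _ hmul hPij hPji

/-- For any choices of symmetric ratios for `(i,j)` and for `(j,i)`, the
associated symmetric discriminants satisfy `D_{ij}² = D_{ji}²`, i.e. `D_{ij} = ±D_{ji}`. -/
theorem symmetric_discriminant_symmetry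
    (g : ℕ) (hg : 1 ≤ g) (K : Type*) [Field K]
    (α : Fin (2*g+2) → K) (hα : Function.Injective α)
    (d : Fin (2*g+2) → K)
    (hd : ∀ m, d m = ∏ n ∈ univ.erase m, (α m - α n))
    (i j : Fin (2*g+2)) (hij : i ≠ j)
    (p : K) (hp : p ^ (4*g) = (d j / d i) ^ 2)
    (ℓij : Fin (2*g+2) → K)
    (hℓij : ∀ k, ℓij k = p * (α i - α k) / (α j - α k))
    (q : K) (hq : q ^ (4*g) = (d i / d j) ^ 2)
    (ℓji : Fin (2*g+2) → K)
    (hℓji : ∀ k, ℓji k = q * (α j - α k) / (α i - α k))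
    (Dij : K)
    (hDij : Dij = (∏ k ∈ univ \ {i, j}, ℓij k) ^ 2 *
      ∏ k ∈ univ \ {i, j}, ∏ k' ∈ (univ \ {i, j}).filter (fun k' => k < k'),
        (ℓij k - ℓij k') ^ 2)
    (Dji : K)
    (hDji : Dji = (∏ k ∈ univ \ {i, j}, ℓji k) ^ 2 *
      ∏ k ∈ univ \ {i, j}, ∏ k' ∈ (univ \ {i, j}).filter (fun k' => k < k'),
        (ℓji k - ℓji k') ^ 2) :
    Dij ^ 2 = Dji ^ 2 :=
  symmetric_discriminant_symmetry_general g K α hα d hd i j hij p hp ℓij hℓij q hq ℓji hℓji Dij hDij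
    Dji hDji
end

section
/- Let i, j, k be pairwise distinct indices in {1, …, 2g+2}. Choose symmetric ratios for (i,j), for (i,k) and for (j,k), with associated symmetric discriminants D_{ij}, D_{ik} and symmetric roots ℓ_{jki}. Then D_{ij}² = (ℓ_{jki}^{4g})^{2g+1} · D_{ik}²; that is, D_{ij} = ℓ_{jki}^{2g(2g+1)}·D_{ik} up to a root of unity, and the relation between the squares is independent of all choices of symmetric ratios. -/
/-!
Let `Δ` be the discriminant of `f`. Since
`ℓ_{abm} - ℓ_{abm'} = p (α_a - α_b)(α_m - α_m') / ((α_b - α_m)(α_b - α_m'))`,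
the discriminant of the `ℓ_{abm}` is that of the `α_m`, `m ≠ a, b`, up to explicit factors, and
peeling `α_a, α_b` off `Δ` gives `D_{ab} f'(α_b)^{2(2g+1)} = (p (α_a - α_b))^{2g(2g+1)} Δ`.
Squaring and substituting `p^{4g} = (f'(α_b)/f'(α_a))²` removes the choice of `p`:
`D_{ab}² (f'(α_a) f'(α_b))^{2(2g+1)} = (α_a - α_b)^{4g(2g+1)} Δ²`. In the same way
`ℓ_{jki}^{4g} = (f'(α_k)/f'(α_j))² ((α_i - α_j)/(α_i - α_k))^{4g}`, and comparing the formulas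
for `(i, j)` and `(i, k)` gives the relation.
-/

open Finset

section PairProd

variable {ι : Type*} [LinearOrder ι] {M : Type*} [CommMonoid M]

def pairProd (s : Finset ι) (G : ι → ι → M) : M :=
  ∏ m ∈ s, ∏ m' ∈ s.filter (m < ·), G m m'

theorem pairProd_eq_prod_ite (s : Finset ι) (G : ι → ι → M) :
    pairProd s G = ∏ m ∈ s, ∏ m' ∈ s, if m < m' then G m m' else 1 := by
  simp only [pairProd, prod_filter]

theorem pairProd_mul (s : Finset ι) (G H : ι → ι → M) :
    pairProd s G * pairProd s H = pairProd s (fun m m' => G m m' * H m m') := by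
  simp only [pairProd, ← prod_mul_distrib]

theorem pairProd_congr {s : Finset ι} {G H : ι → ι → M}
    (h : ∀ m ∈ s, ∀ m' ∈ s, G m m' = H m m') : pairProd s G = pairProd s H :=
  prod_congr rfl fun m hm => prod_congr rfl fun m' hm' => h m hm m' (mem_filter.1 hm').1

theorem pairProd_insert {s : Finset ι} {a : ι} (ha : a ∉ s) {G : ι → ι → M}
    (hG : ∀ m m', G m m' = G m' m) :
    pairProd (insert a s) G = (∏ m ∈ s, G a m) * pairProd s G := by
  simp only [pairProd_eq_prod_ite, Finset.prod_insert, ha, not_false_eq_true, lt_irrefl,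
    if_false, one_mul, prod_mul_distrib, ← mul_assoc]
  congr 1
  rw [← prod_mul_distrib]
  refine prod_congr rfl fun m hm => ?_
  rcases lt_or_gt_of_ne (ne_of_mem_of_not_mem hm ha) with h | h
  · simp [h, h.not_gt, hG a m]
  · simp [h, h.not_gt]

theorem pairProd_mul_mul (s : Finset ι) (f : ι → M) :
    pairProd s (fun m m' => f m * f m') = (∏ m ∈ s, f m) ^ (#s - 1) := by
  induction s using Finset.induction with
  | empty => simp [pairProd]
  | @insert a s ha ih =>
    rw [pairProd_insert ha (fun _ _ => mul_comm _ _), ih, prod_insert ha,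
      card_insert_of_notMem ha, Nat.add_sub_cancel, prod_mul_distrib, prod_const, mul_pow]
    rcases s.eq_empty_or_nonempty with rfl | hs
    · simp
    · rw [mul_assoc, mul_pow_sub_one hs.card_pos.ne']

end PairProd

section RootDiscr

variable {ι : Type*} [LinearOrder ι] {K : Type*} [Field K]

/-- The discriminant of `∏ m ∈ s, (X - x m)`. -/
def rootDiscr (s : Finset ι) (x : ι → K) : K :=
  pairProd s fun m m' => (x m - x m') ^ 2

theorem rootDiscr_insert {s : Finset ι} {a : ι} (ha : a ∉ s) (x : ι → K) :
    rootDiscr (insert a s) x = (∏ m ∈ s, (x a - x m)) ^ 2 * rootDiscr s x := by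
  rw [rootDiscr, pairProd_insert ha (fun _ _ => by ring), prod_pow, rootDiscr]

theorem rootDiscr_mul_prod_pow_of_sub_mul {s : Finset ι} {x y β : ι → K} {c : K}
    (h : ∀ m ∈ s, ∀ m' ∈ s, (y m - y m') * (β m * β m') = c * (x m - x m')) :
    rootDiscr s y * (∏ m ∈ s, β m) ^ (2 * (#s - 1)) = c ^ (#s * (#s - 1)) * rootDiscr s x := by
  have hβ : (∏ m ∈ s, β m) ^ (2 * (#s - 1)) =
      pairProd s fun m m' => β m ^ 2 * β m' ^ 2 := by
    rw [pairProd_mul_mul, prod_pow, pow_mul]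
  have hc : c ^ (#s * (#s - 1)) = pairProd s fun _ _ => c * c := by
    rw [pairProd_mul_mul s (fun _ => c), prod_const, ← pow_mul]
  rw [hβ, hc, rootDiscr, rootDiscr, pairProd_mul, pairProd_mul]
  refine pairProd_congr fun m hm m' hm' => ?_
  linear_combination ((y m - y m') * (β m * β m') + c * (x m - x m')) * h m hm m' hm'

end RootDiscr

section SymmetricRoots

variable {ι K : Type*} [Field K] {α : ι → K} {a b : ι}

/-- The symmetric root `ℓ_{abm}` for a symmetric ratio `p` of `(a, b)`. -/
def symmRoot (α : ι → K) (p : K) (a b m : ι) : K :=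
  p * (α a - α m) / (α b - α m)

theorem symmRoot_sub_symmRoot_mul (p : K) {m m' : ι} (hm : α b ≠ α m) (hm' : α b ≠ α m') :
    (symmRoot α p a b m - symmRoot α p a b m') * ((α b - α m) * (α b - α m')) =
      p * (α a - α b) * (α m - α m') := by
  rw [symmRoot, symmRoot, div_sub_div _ _ (sub_ne_zero.2 hm) (sub_ne_zero.2 hm'),
    div_mul_cancel₀ _ (mul_ne_zero (sub_ne_zero.2 hm) (sub_ne_zero.2 hm'))]
  ring

theorem prod_symmRoot_mul (hα : Function.Injective α) (p : K) (s : Finset ι) (hb : b ∉ s) :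
    (∏ m ∈ s, symmRoot α p a b m) * ∏ m ∈ s, (α b - α m) =
      p ^ #s * ∏ m ∈ s, (α a - α m) := by
  rw [← prod_mul_distrib, ← prod_const, ← prod_mul_distrib]
  refine prod_congr rfl fun m hm => ?_
  exact div_mul_cancel₀ _ (sub_ne_zero.2 <| hα.ne (ne_of_mem_of_not_mem hm hb).symm)

variable [Fintype ι] [LinearOrder ι]

/-- `f'(α a)` for `f = ∏ m, (X - α m)`. -/
def derivAtRoot (α : ι → K) (a : ι) : K :=
  ∏ m ∈ univ.erase a, (α a - α m)

/-- The symmetric discriminant `D_{ab}`, the discriminant of `X ∏_{m ≠ a, b} (X - ℓ_{abm})`. -/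
def symmDiscr (α : ι → K) (p : K) (a b : ι) : K :=
  (∏ m ∈ univ \ {a, b}, symmRoot α p a b m) ^ 2 * rootDiscr (univ \ {a, b}) (symmRoot α p a b)

theorem derivAtRoot_ne_zero (hα : Function.Injective α) (a : ι) : derivAtRoot α a ≠ 0 :=
  prod_ne_zero_iff.2 fun _ hm => sub_ne_zero.2 <| hα.ne (ne_of_mem_erase hm).symm

theorem univ_eq_insert_insert_sdiff (hab : a ≠ b) :
    (univ : Finset ι) = insert a (insert b (univ \ {a, b})) := by
  ext m; by_cases m = a <;> by_cases m = b <;> simp_all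

theorem univ_erase_eq_insert_sdiff (hab : a ≠ b) :
    (univ : Finset ι).erase b = insert a (univ \ {a, b}) := by
  ext m; by_cases m = a <;> by_cases m = b <;> simp_all

theorem derivAtRoot_eq (hab : a ≠ b) :
    derivAtRoot α b = (α b - α a) * ∏ m ∈ univ \ {a, b}, (α b - α m) := by
  rw [derivAtRoot, univ_erase_eq_insert_sdiff hab, prod_insert (by simp)]

theorem rootDiscr_univ_eq (hab : a ≠ b) (α : ι → K) :
    rootDiscr univ α = ((α a - α b) * (∏ m ∈ univ \ {a, b}, (α a - α m)) *
      ∏ m ∈ univ \ {a, b}, (α b - α m)) ^ 2 * rootDiscr (univ \ {a, b}) α := by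
  conv_lhs => rw [univ_eq_insert_insert_sdiff hab]
  rw [rootDiscr_insert (by simp [hab]), rootDiscr_insert (by simp), prod_insert (by simp)]
  ring

theorem card_univ_sdiff_pair {N : ℕ} (hN : Fintype.card ι = N + 2) (hab : a ≠ b) :
    #(univ \ {a, b}) = N := by
  rw [card_sdiff_of_subset (subset_univ _), card_univ, hN, card_pair_eq_two_iff.2 hab]
  rfl

theorem symmDiscr_mul_derivAtRoot_pow (hα : Function.Injective α) (hab : a ≠ b) {N : ℕ}
    (hN : Fintype.card ι = N + 2) (p : K) :
    symmDiscr α p a b * derivAtRoot α b ^ (2 * (N + 1)) =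
      (p * (α a - α b)) ^ (N * (N + 1)) * rootDiscr univ α := by
  rw [symmDiscr, derivAtRoot_eq hab, rootDiscr_univ_eq hab, mul_pow, pow_mul (α b - α a),
    ← neg_sub, neg_sq]
  have hbS : b ∉ univ \ {a, b} := by simp
  have hS := card_univ_sdiff_pair hN hab
  generalize univ \ {a, b} = S at hbS hS ⊢
  rcases N with _ | N
  · simp [card_eq_zero.1 hS, rootDiscr, pairProd, mul_comm]
  have hroots := prod_symmRoot_mul hα p S hbS (a := a)
  have hdiscr := rootDiscr_mul_prod_pow_of_sub_mul (y := symmRoot α p a b) (x := α)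
    fun m hm m' hm' => symmRoot_sub_symmRoot_mul p (hα.ne (ne_of_mem_of_not_mem hm hbS).symm)
      (hα.ne (ne_of_mem_of_not_mem hm' hbS).symm)
  rw [hS] at hroots hdiscr
  rw [Nat.add_sub_cancel] at hdiscr
  generalize α a - α b = u at hdiscr ⊢
  calc (∏ m ∈ S, symmRoot α p a b m) ^ 2 * rootDiscr S (symmRoot α p a b) *
        ((u ^ 2) ^ (N + 1 + 1) * (∏ m ∈ S, (α b - α m)) ^ (2 * (N + 1 + 1)))
      = ((∏ m ∈ S, symmRoot α p a b m) * ∏ m ∈ S, (α b - α m)) ^ 2 *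
          (rootDiscr S (symmRoot α p a b) * (∏ m ∈ S, (α b - α m)) ^ (2 * N)) *
          (u ^ 2) ^ (N + 2) * (∏ m ∈ S, (α b - α m)) ^ 2 := by ring
    _ = _ := by rw [hroots, hdiscr]; ring

theorem sq_symmDiscr_mul_derivAtRoot (hα : Function.Injective α) (hab : a ≠ b) {N : ℕ}
    (hN : Fintype.card ι = N + 2) {p : K}
    (hp : p ^ (2 * N) = (derivAtRoot α b / derivAtRoot α a) ^ 2) :
    symmDiscr α p a b ^ 2 * (derivAtRoot α a * derivAtRoot α b) ^ (2 * (N + 1)) =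
      ((α a - α b) ^ (2 * N)) ^ (N + 1) * rootDiscr univ α ^ 2 := by
  have hD := symmDiscr_mul_derivAtRoot_pow hα hab hN p
  rw [div_pow, eq_div_iff (pow_ne_zero 2 (derivAtRoot_ne_zero hα a))] at hp
  refine mul_right_cancel₀ (pow_ne_zero (2 * (N + 1)) (derivAtRoot_ne_zero hα b)) ?_
  generalize α a - α b = u at hD ⊢
  calc symmDiscr α p a b ^ 2 * (derivAtRoot α a * derivAtRoot α b) ^ (2 * (N + 1)) *
        derivAtRoot α b ^ (2 * (N + 1))
      = (symmDiscr α p a b * derivAtRoot α b ^ (2 * (N + 1))) ^ 2 *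
          derivAtRoot α a ^ (2 * (N + 1)) := by ring
    _ = (p ^ (2 * N) * derivAtRoot α a ^ 2) ^ (N + 1) * (u ^ (2 * N)) ^ (N + 1) *
          rootDiscr univ α ^ 2 := by rw [hD]; ring
    _ = _ := by rw [hp]; ring

theorem symmRoot_pow_mul (hα : Function.Injective α) {m : ι} (hmb : m ≠ b) {N : ℕ} {p : K}
    (hp : p ^ (2 * N) = (derivAtRoot α b / derivAtRoot α a) ^ 2) :
    symmRoot α p a b m ^ (2 * N) * ((α m - α b) ^ (2 * N) * derivAtRoot α a ^ 2) =
      (α m - α a) ^ (2 * N) * derivAtRoot α b ^ 2 := by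
  rw [div_pow, eq_div_iff (pow_ne_zero 2 (derivAtRoot_ne_zero hα a))] at hp
  have hroot : symmRoot α p a b m * (α m - α b) = p * (α m - α a) := by
    have : α b - α m ≠ 0 := sub_ne_zero.2 (hα.ne hmb.symm)
    rw [symmRoot]
    field_simp
    ring
  calc symmRoot α p a b m ^ (2 * N) * ((α m - α b) ^ (2 * N) * derivAtRoot α a ^ 2)
      = (symmRoot α p a b m * (α m - α b)) ^ (2 * N) * derivAtRoot α a ^ 2 := by
        rw [mul_pow]; ring
    _ = p ^ (2 * N) * derivAtRoot α a ^ 2 * (α m - α a) ^ (2 * N) := by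
        rw [hroot, mul_pow]; ring
    _ = _ := by rw [hp, mul_comm]

end SymmetricRoots

theorem symmetric_discriminant_relation_b_general
    (g : ℕ) (K : Type*) [Field K]
    (α : Fin (2*g+2) → K) (hα : Function.Injective α)
    (d : Fin (2*g+2) → K)
    (hd : ∀ m, d m = ∏ n ∈ univ.erase m, (α m - α n))
    (i j k : Fin (2*g+2)) (hij : i ≠ j) (hik : i ≠ k)
    (pij : K) (hpij : pij ^ (4*g) = (d j / d i) ^ 2)
    (ℓij : Fin (2*g+2) → K)
    (hℓij : ∀ m, ℓij m = pij * (α i - α m) / (α j - α m))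
    (pik : K) (hpik : pik ^ (4*g) = (d k / d i) ^ 2)
    (ℓik : Fin (2*g+2) → K)
    (hℓik : ∀ m, ℓik m = pik * (α i - α m) / (α k - α m))
    (pjk : K) (hpjk : pjk ^ (4*g) = (d k / d j) ^ 2)
    (ℓjk : Fin (2*g+2) → K)
    (hℓjk : ∀ m, ℓjk m = pjk * (α j - α m) / (α k - α m))
    (Dij : K)
    (hDij : Dij = (∏ m ∈ univ \ {i, j}, ℓij m) ^ 2 *
      ∏ m ∈ univ \ {i, j}, ∏ m' ∈ (univ \ {i, j}).filter (fun m' => m < m'),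
        (ℓij m - ℓij m') ^ 2)
    (Dik : K)
    (hDik : Dik = (∏ m ∈ univ \ {i, k}, ℓik m) ^ 2 *
      ∏ m ∈ univ \ {i, k}, ∏ m' ∈ (univ \ {i, k}).filter (fun m' => m < m'),
        (ℓik m - ℓik m') ^ 2) :
    Dij ^ 2 = ((ℓjk i) ^ (4*g)) ^ (2*g+1) * Dik ^ 2 := by
  obtain rfl : d = derivAtRoot α := funext hd
  obtain rfl : ℓij = symmRoot α pij i j := funext hℓij
  obtain rfl : ℓik = symmRoot α pik i k := funext hℓik
  obtain rfl : ℓjk = symmRoot α pjk j k := funext hℓjk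
  obtain rfl : Dij = symmDiscr α pij i j := hDij
  obtain rfl : Dik = symmDiscr α pik i k := hDik
  rw [show 4 * g = 2 * (2 * g) by ring] at hpij hpik hpjk ⊢
  have hN : Fintype.card (Fin (2*g+2)) = 2 * g + 2 := Fintype.card_fin _
  have hDij := sq_symmDiscr_mul_derivAtRoot hα hij hN hpij
  have hDik := sq_symmDiscr_mul_derivAtRoot hα hik hN hpik
  have hℓ := congrArg (· ^ (2 * g + 1)) (symmRoot_pow_mul hα hik hpjk)
  have hne (m : Fin (2*g+2)) := derivAtRoot_ne_zero hα m
  refine mul_right_cancel₀ (pow_ne_zero (2 * (2 * g + 1))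
    (mul_ne_zero (mul_ne_zero (hne i) (hne j)) (hne k))) ?_
  linear_combination derivAtRoot α k ^ (2 * (2 * g + 1)) * hDij -
    (symmRoot α pjk j k i ^ (2 * (2 * g))) ^ (2 * g + 1) * derivAtRoot α j ^ (2 * (2 * g + 1)) *
      hDik - rootDiscr univ α ^ 2 * hℓ

/-- For pairwise distinct `i, j, k` and any choices of symmetric ratios for
`(i,j)`, `(i,k)` and `(j,k)`, the associated symmetric discriminants satisfy
`D_{ij}² = (ℓ_{jki}^{4g})^{2g+1} · D_{ik}²`, i.e. `D_{ij} = ℓ_{jki}^{2g(2g+1)}·D_{ik}`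
up to a root of unity, independently of all choices of symmetric ratios. -/
theorem symmetric_discriminant_relation_b
    (g : ℕ) (hg : 1 ≤ g) (K : Type*) [Field K]
    (α : Fin (2*g+2) → K) (hα : Function.Injective α)
    (d : Fin (2*g+2) → K)
    (hd : ∀ m, d m = ∏ n ∈ univ.erase m, (α m - α n))
    (i j k : Fin (2*g+2)) (hij : i ≠ j) (hik : i ≠ k) (hjk : j ≠ k)
    (pij : K) (hpij : pij ^ (4*g) = (d j / d i) ^ 2)
    (ℓij : Fin (2*g+2) → K)
    (hℓij : ∀ m, ℓij m = pij * (α i - α m) / (α j - α m))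
    (pik : K) (hpik : pik ^ (4*g) = (d k / d i) ^ 2)
    (ℓik : Fin (2*g+2) → K)
    (hℓik : ∀ m, ℓik m = pik * (α i - α m) / (α k - α m))
    (pjk : K) (hpjk : pjk ^ (4*g) = (d k / d j) ^ 2)
    (ℓjk : Fin (2*g+2) → K)
    (hℓjk : ∀ m, ℓjk m = pjk * (α j - α m) / (α k - α m))
    (Dij : K)
    (hDij : Dij = (∏ m ∈ univ \ {i, j}, ℓij m) ^ 2 *
      ∏ m ∈ univ \ {i, j}, ∏ m' ∈ (univ \ {i, j}).filter (fun m' => m < m'),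
        (ℓij m - ℓij m') ^ 2)
    (Dik : K)
    (hDik : Dik = (∏ m ∈ univ \ {i, k}, ℓik m) ^ 2 *
      ∏ m ∈ univ \ {i, k}, ∏ m' ∈ (univ \ {i, k}).filter (fun m' => m < m'),
        (ℓik m - ℓik m') ^ 2) :
    Dij ^ 2 = ((ℓjk i) ^ (4*g)) ^ (2*g+1) * Dik ^ 2 :=
  symmetric_discriminant_relation_b_general g K α hα d hd i j k hij hik pij hpij ℓij hℓij pik hpik
    ℓik hℓik pjk hpjk ℓjk hℓjk Dij hDij Dik hDik
end

section
/- Let i, j, r, s be pairwise distinct indices in {1, …, 2g+2}. Choose symmetric ratios for (i,j), for (r,s), for (i,r) and for (j,s), with associated symmetric discriminants D_{ij}, D_{rs} and symmetric roots ℓ_{irs}, ℓ_{jsi}. Then D_{ij}² = (ℓ_{irs}^{4g}·ℓ_{jsi}^{4g})^{2g+1} · D_{rs}²; that is, D_{ij} = ℓ_{irs}^{2g(2g+1)}·ℓ_{jsi}^{2g(2g+1)}·D_{rs} up to a root of unity, and the relation between the squares is independent of all choices of symmetric ratios. -/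
/-!
Put `Q(a, b) := (α_a - α_b)^(4g) / (f'(α_a) f'(α_b))^2` and let `Δ = ∏_{m ≠ m'} (α_m - α_m')`.
The Möbius map `t ↦ p (α_a - t) / (α_b - t)` sends the `α_m` to the symmetric roots `ℓ_{abm}`,
so the differences of symmetric roots are `p (α_a - α_b) (α_m - α_m') / ((α_b - α_m)(α_b - α_m'))`.
Collecting factors and eliminating `p` by `p^(4g) = (f'(α_b)/f'(α_a))^2` gives
`D_{ab}^2 = Δ^2 · Q(a, b)^(2g+1)`, whatever the symmetric ratio. On the other hand
`ℓ_{irs}^(4g) ℓ_{jsi}^(4g) = Q(i, j) / Q(r, s)`, and the theorem follows by dividing the two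
instances of the first formula.
-/

open Finset Function

namespace Finset

variable {ι M : Type*} [CommMonoid M]

theorem prod_offDiag_eq_sq_prod_filter_lt [LinearOrder ι] (s : Finset ι) {f : ι → ι → M}
    (hf : ∀ m m', f m m' = f m' m) :
    ∏ q ∈ s.offDiag, f q.1 q.2 = (∏ m ∈ s, ∏ m' ∈ s.filter (fun m' => m < m'), f m m') ^ 2 := by
  have hlt : ∏ q ∈ s.offDiag with q.1 < q.2, f q.1 q.2
      = ∏ m ∈ s, ∏ m' ∈ s.filter (fun m' => m < m'), f m m' :=
    prod_finset_product' _ _ _ fun q => by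
      simp only [mem_filter, mem_offDiag]
      exact ⟨fun h => ⟨h.1.1, h.1.2.1, h.2⟩, fun h => ⟨⟨h.1, h.2.1, h.2.2.ne⟩, h.2.2⟩⟩
  have hgt : ∏ q ∈ s.offDiag with ¬q.1 < q.2, f q.1 q.2
      = ∏ q ∈ s.offDiag with q.1 < q.2, f q.1 q.2 :=
    prod_nbij' Prod.swap Prod.swap (by simp +contextual [lt_iff_le_and_ne, eq_comm])
      (by simp +contextual [lt_iff_le_and_ne, eq_comm]) (by simp) (by simp) fun q _ => hf _ _
  rw [← prod_filter_mul_prod_filter_not s.offDiag (fun q => q.1 < q.2), hgt, hlt, sq]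

theorem prod_offDiag_mul_mul_sq [DecidableEq ι] (s : Finset ι) (f : ι → M) :
    (∏ q ∈ s.offDiag, f q.1 * f q.2) * (∏ m ∈ s, f m) ^ 2 = (∏ m ∈ s, f m) ^ (2 * #s) := by
  have hdiag : ∏ q ∈ s.diag, f q.1 * f q.2 = (∏ m ∈ s, f m) ^ 2 := by
    rw [prod_diag, prod_mul_distrib, sq]
  rw [← hdiag, mul_comm, ← prod_union (disjoint_diag_offDiag s), diag_union_offDiag,
    prod_product, two_mul, pow_add]
  simp only [prod_mul_distrib, prod_const, prod_pow]

theorem pow_two_mul_card_pow_card_succ {N : Type*} [Monoid N] [DecidableEq ι] (s : Finset ι)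
    (y : N) : (y ^ (2 * #s)) ^ (#s + 1) = (y ^ #s) ^ 4 * (y ^ #s.offDiag) ^ 2 := by
  simp only [← pow_mul, ← pow_add, offDiag_card]
  congr 1
  zify [Nat.le_mul_self #s]
  ring

end Finset

section Field

variable {ι K : Type*} [Field K]

theorem moebius_sub_moebius (p u v x y : K) (hx : v - x ≠ 0) (hy : v - y ≠ 0) :
    p * (u - x) / (v - x) - p * (u - y) / (v - y) =
      p * (u - v) * (x - y) / ((v - x) * (v - y)) := by
  field_simp
  ring

theorem prod_offDiag_moebius_sub_mul [DecidableEq ι] (s : Finset ι) (x : ι → K) (p u v : K)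
    (hv : ∀ m ∈ s, v - x m ≠ 0) :
    (∏ q ∈ s.offDiag, (p * (u - x q.1) / (v - x q.1) - p * (u - x q.2) / (v - x q.2))) *
        ∏ q ∈ s.offDiag, ((v - x q.1) * (v - x q.2)) =
      (p * (u - v)) ^ #s.offDiag * ∏ q ∈ s.offDiag, (x q.1 - x q.2) := by
  rw [← prod_mul_distrib, ← prod_const, ← prod_mul_distrib]
  refine prod_congr rfl fun q hq => ?_
  obtain ⟨h1, h2, -⟩ := mem_offDiag.mp hq
  rw [moebius_sub_moebius _ _ _ _ _ (hv _ h1) (hv _ h2),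
    div_mul_cancel₀ _ (mul_ne_zero (hv _ h1) (hv _ h2))]

theorem sq_prod_offDiag_insert_sub [DecidableEq ι] {s : Finset ι} {c : ι} (hc : c ∉ s)
    (x : ι → K) :
    (∏ q ∈ (insert c s).offDiag, (x q.1 - x q.2)) ^ 2 =
      (∏ q ∈ s.offDiag, (x q.1 - x q.2)) ^ 2 * (∏ m ∈ s, (x c - x m)) ^ 4 := by
  have hflip : (∏ m ∈ s, (x m - x c)) ^ 2 = (∏ m ∈ s, (x c - x m)) ^ 2 := by
    simp only [← prod_pow]
    exact prod_congr rfl fun _ _ => by ring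
  rw [offDiag_insert hc, prod_union, prod_union, prod_product, prod_product, prod_singleton]
  · simp only [prod_singleton, mul_pow, hflip]
    ring
  all_goals grind [disjoint_left]

theorem sq_prod_offDiag_univ_sub [Fintype ι] [DecidableEq ι] {a b : ι} (hab : a ≠ b) (x : ι → K) :
    (∏ q ∈ (univ : Finset ι).offDiag, (x q.1 - x q.2)) ^ 2 =
      (∏ q ∈ (univ \ {a, b}).offDiag, (x q.1 - x q.2)) ^ 2 *
        (∏ m ∈ univ \ {a, b}, (x b - x m)) ^ 4 * (∏ m ∈ univ.erase a, (x a - x m)) ^ 4 := by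
  have herase : univ.erase a = insert b (univ \ {a, b}) := by grind
  conv_lhs => rw [← insert_erase (mem_univ a)]
  rw [sq_prod_offDiag_insert_sub (notMem_erase a univ), herase,
    sq_prod_offDiag_insert_sub (by simp)]

theorem sq_symmetricDiscriminant_mul_pow [LinearOrder ι] (s : Finset ι) (x : ι → K) (p u v : K)
    (hv : ∀ m ∈ s, v - x m ≠ 0) {ℓ : ι → K} (hℓ : ∀ m, ℓ m = p * (u - x m) / (v - x m)) :
    ((∏ m ∈ s, ℓ m) ^ 2 * ∏ m ∈ s, ∏ m' ∈ s.filter (fun m' => m < m'), (ℓ m - ℓ m') ^ 2) ^ 2 *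
        (∏ m ∈ s, (v - x m)) ^ (4 * #s) =
      (p ^ #s * ∏ m ∈ s, (u - x m)) ^ 4 *
        ((p * (u - v)) ^ #s.offDiag * ∏ q ∈ s.offDiag, (x q.1 - x q.2)) ^ 2 := by
  have hD : ((∏ m ∈ s, ℓ m) ^ 2 *
      ∏ m ∈ s, ∏ m' ∈ s.filter (fun m' => m < m'), (ℓ m - ℓ m') ^ 2) ^ 2 =
      (∏ m ∈ s, ℓ m) ^ 4 * (∏ q ∈ s.offDiag, (ℓ q.1 - ℓ q.2)) ^ 2 := by
    rw [← prod_pow s.offDiag,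
      prod_offDiag_eq_sq_prod_filter_lt s (f := fun m m' => (ℓ m - ℓ m') ^ 2) fun _ _ => by ring]
    ring
  have hprod : (∏ m ∈ s, ℓ m) * ∏ m ∈ s, (v - x m) = p ^ #s * ∏ m ∈ s, (u - x m) := by
    rw [← prod_mul_distrib, prod_congr rfl fun m hm => by rw [hℓ, div_mul_cancel₀ _ (hv m hm)],
      prod_mul_distrib, prod_const]
  have hdiff : (∏ q ∈ s.offDiag, (ℓ q.1 - ℓ q.2)) *
      ∏ q ∈ s.offDiag, ((v - x q.1) * (v - x q.2)) =
      (p * (u - v)) ^ #s.offDiag * ∏ q ∈ s.offDiag, (x q.1 - x q.2) := by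
    simp only [hℓ]
    exact prod_offDiag_moebius_sub_mul s x p u v hv
  rw [hD, show 4 * #s = 2 * #s * 2 by ring, pow_mul, ← prod_offDiag_mul_mul_sq s (v - x ·),
    ← hprod, ← hdiff]
  ring

theorem sq_symmetricDiscriminant {n : ℕ} {α : Fin (n + 2) → K} (hα : Injective α)
    {d : Fin (n + 2) → K} (hd : ∀ m, d m = ∏ k ∈ univ.erase m, (α m - α k))
    {a b : Fin (n + 2)} (hab : a ≠ b) {p : K} (hp : p ^ (2 * n) = (d b / d a) ^ 2)
    {ℓ : Fin (n + 2) → K} (hℓ : ∀ m, ℓ m = p * (α a - α m) / (α b - α m)) :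
    ((∏ m ∈ univ \ {a, b}, ℓ m) ^ 2 *
        ∏ m ∈ univ \ {a, b}, ∏ m' ∈ (univ \ {a, b}).filter (fun m' => m < m'),
          (ℓ m - ℓ m') ^ 2) ^ 2 =
      (∏ q ∈ (univ : Finset (Fin (n + 2))).offDiag, (α q.1 - α q.2)) ^ 2 *
        ((α a - α b) ^ (2 * n) / (d a * d b) ^ 2) ^ (n + 1) := by
  set S : Finset (Fin (n + 2)) := univ \ {a, b}
  have hcard : #S = n := by
    rw [card_sdiff_of_subset (subset_univ _), card_univ, Fintype.card_fin, card_pair hab]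
    rfl
  have haS : a ∉ S := by simp [S]
  have hbS : b ∉ S := by simp [S]
  have hSa : ∀ m ∈ S, α a - α m ≠ 0 := fun m hm =>
    sub_ne_zero.mpr (hα.ne (ne_of_mem_of_not_mem hm haS).symm)
  have hSb : ∀ m ∈ S, α b - α m ≠ 0 := fun m hm =>
    sub_ne_zero.mpr (hα.ne (ne_of_mem_of_not_mem hm hbS).symm)
  have hda : d a = (α a - α b) * ∏ m ∈ S, (α a - α m) := by
    rw [hd, show univ.erase a = insert b S by grind, prod_insert hbS]
  have hdb : d b = -((α a - α b) * ∏ m ∈ S, (α b - α m)) := by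
    rw [hd, show univ.erase b = insert a S by grind, prod_insert haS]; ring
  have hΔ := sq_prod_offDiag_univ_sub hab α
  rw [← hd] at hΔ
  have hD := sq_symmetricDiscriminant_mul_pow S α p (α a) (α b) hSb hℓ
  have hpow (y : K) : (y ^ (2 * n)) ^ (n + 1) = (y ^ n) ^ 4 * (y ^ #S.offDiag) ^ 2 := by
    simpa only [hcard] using pow_two_mul_card_pow_card_succ S y
  have hx : α a - α b ≠ 0 := sub_ne_zero.mpr (hα.ne hab)
  have hA : ∏ m ∈ S, (α a - α m) ≠ 0 := prod_ne_zero_iff.mpr hSa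
  have hB : ∏ m ∈ S, (α b - α m) ≠ 0 := prod_ne_zero_iff.mpr hSb
  rw [hcard] at hD
  rw [hΔ, eq_div_of_mul_eq (pow_ne_zero _ hB) hD]
  generalize α a - α b = x, ∏ m ∈ S, (α a - α m) = A, ∏ m ∈ S, (α b - α m) = B,
    ∏ q ∈ S.offDiag, (α q.1 - α q.2) = V at *
  calc (p ^ n * A) ^ 4 * ((p * x) ^ #S.offDiag * V) ^ 2 / B ^ (4 * n)
      = ((p ^ n) ^ 4 * (p ^ #S.offDiag) ^ 2) *
          (A ^ 4 * (x ^ #S.offDiag) ^ 2 * V ^ 2 / B ^ (4 * n)) := by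
        ring
    _ = ((d b / d a) ^ 2) ^ (n + 1) * (A ^ 4 * (x ^ #S.offDiag) ^ 2 * V ^ 2 / B ^ (4 * n)) := by
        rw [← hpow, hp]
    _ = V ^ 2 * B ^ 4 * d a ^ 4 *
          ((x ^ n) ^ 4 * (x ^ #S.offDiag) ^ 2 / ((d a * d b) ^ 2) ^ (n + 1)) := by
        rw [hda, hdb]
        simp only [div_pow, mul_pow, neg_pow_two]
        field_simp
        ring
    _ = V ^ 2 * B ^ 4 * d a ^ 4 * (x ^ (2 * n) / (d a * d b) ^ 2) ^ (n + 1) := by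
        rw [div_pow, hpow x]

theorem symmetricRoot_pow_mul_symmetricRoot_pow {n : ℕ} {α d : ι → K} (hd : ∀ m, d m ≠ 0)
    {i j r s : ι} (his : α i ≠ α s) (hrs : α r ≠ α s) {p q : K}
    (hp : p ^ (2 * n) = (d r / d i) ^ 2) (hq : q ^ (2 * n) = (d s / d j) ^ 2) :
    (p * (α i - α s) / (α r - α s)) ^ (2 * n) * (q * (α j - α i) / (α s - α i)) ^ (2 * n) *
        ((α r - α s) ^ (2 * n) / (d r * d s) ^ 2) =
      (α i - α j) ^ (2 * n) / (d i * d j) ^ 2 := by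
  have his' : α i - α s ≠ 0 := sub_ne_zero.mpr his
  have hsi : α s - α i ≠ 0 := sub_ne_zero.mpr his.symm
  have hrs' : α r - α s ≠ 0 := sub_ne_zero.mpr hrs
  rw [mul_div_assoc, mul_pow, hp, mul_div_assoc, mul_pow, hq]
  simp only [pow_mul, div_pow, mul_pow]
  field_simp [hd]
  ring

end Field

theorem symmetric_discriminant_relation_c_general
    (g : ℕ) (K : Type*) [Field K]
    (α : Fin (2*g+2) → K) (hα : Function.Injective α)
    (d : Fin (2*g+2) → K)
    (hd : ∀ m, d m = ∏ n ∈ univ.erase m, (α m - α n))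
    (i j r s : Fin (2*g+2))
    (hij : i ≠ j) (his : i ≠ s) (hrs : r ≠ s)
    (pij : K) (hpij : pij ^ (4*g) = (d j / d i) ^ 2)
    (ℓij : Fin (2*g+2) → K)
    (hℓij : ∀ m, ℓij m = pij * (α i - α m) / (α j - α m))
    (prs : K) (hprs : prs ^ (4*g) = (d s / d r) ^ 2)
    (ℓrs : Fin (2*g+2) → K)
    (hℓrs : ∀ m, ℓrs m = prs * (α r - α m) / (α s - α m))
    (pir : K) (hpir : pir ^ (4*g) = (d r / d i) ^ 2)
    (ℓir : Fin (2*g+2) → K)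
    (hℓir : ∀ m, ℓir m = pir * (α i - α m) / (α r - α m))
    (pjs : K) (hpjs : pjs ^ (4*g) = (d s / d j) ^ 2)
    (ℓjs : Fin (2*g+2) → K)
    (hℓjs : ∀ m, ℓjs m = pjs * (α j - α m) / (α s - α m))
    (Dij : K)
    (hDij : Dij = (∏ m ∈ univ \ {i, j}, ℓij m) ^ 2 *
      ∏ m ∈ univ \ {i, j}, ∏ m' ∈ (univ \ {i, j}).filter (fun m' => m < m'),
        (ℓij m - ℓij m') ^ 2)
    (Drs : K)
    (hDrs : Drs = (∏ m ∈ univ \ {r, s}, ℓrs m) ^ 2 *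
      ∏ m ∈ univ \ {r, s}, ∏ m' ∈ (univ \ {r, s}).filter (fun m' => m < m'),
        (ℓrs m - ℓrs m') ^ 2) :
    Dij ^ 2 = ((ℓir s) ^ (4*g) * (ℓjs i) ^ (4*g)) ^ (2*g+1) * Drs ^ 2 := by
  rw [show 4 * g = 2 * (2 * g) by ring] at hpij hprs hpir hpjs ⊢
  have hd0 (m : Fin (2 * g + 2)) : d m ≠ 0 := hd m ▸ prod_ne_zero_iff.mpr fun k hk =>
    sub_ne_zero.mpr (hα.ne (ne_of_mem_erase hk).symm)
  rw [hDij, hDrs, sq_symmetricDiscriminant hα hd hij hpij hℓij,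
    sq_symmetricDiscriminant hα hd hrs hprs hℓrs, hℓir, hℓjs,
    ← symmetricRoot_pow_mul_symmetricRoot_pow hd0 (hα.ne his) (hα.ne hrs) hpir hpjs]
  ring

/-- For pairwise distinct `i, j, r, s` and any choices of symmetric ratios for
`(i,j)`, `(r,s)`, `(i,r)` and `(j,s)`, the associated symmetric discriminants satisfy
`D_{ij}² = (ℓ_{irs}^{4g}·ℓ_{jsi}^{4g})^{2g+1} · D_{rs}²`, i.e.
`D_{ij} = ℓ_{irs}^{2g(2g+1)}·ℓ_{jsi}^{2g(2g+1)}·D_{rs}` up to a root of unity, independently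
of all choices of symmetric ratios. -/
theorem symmetric_discriminant_relation_c
    (g : ℕ) (hg : 1 ≤ g) (K : Type*) [Field K]
    (α : Fin (2*g+2) → K) (hα : Function.Injective α)
    (d : Fin (2*g+2) → K)
    (hd : ∀ m, d m = ∏ n ∈ univ.erase m, (α m - α n))
    (i j r s : Fin (2*g+2))
    (hij : i ≠ j) (hir : i ≠ r) (his : i ≠ s) (hjr : j ≠ r) (hjs : j ≠ s) (hrs : r ≠ s)
    (pij : K) (hpij : pij ^ (4*g) = (d j / d i) ^ 2)
    (ℓij : Fin (2*g+2) → K)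
    (hℓij : ∀ m, ℓij m = pij * (α i - α m) / (α j - α m))
    (prs : K) (hprs : prs ^ (4*g) = (d s / d r) ^ 2)
    (ℓrs : Fin (2*g+2) → K)
    (hℓrs : ∀ m, ℓrs m = prs * (α r - α m) / (α s - α m))
    (pir : K) (hpir : pir ^ (4*g) = (d r / d i) ^ 2)
    (ℓir : Fin (2*g+2) → K)
    (hℓir : ∀ m, ℓir m = pir * (α i - α m) / (α r - α m))
    (pjs : K) (hpjs : pjs ^ (4*g) = (d s / d j) ^ 2)
    (ℓjs : Fin (2*g+2) → K)
    (hℓjs : ∀ m, ℓjs m = pjs * (α j - α m) / (α s - α m))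
    (Dij : K)
    (hDij : Dij = (∏ m ∈ univ \ {i, j}, ℓij m) ^ 2 *
      ∏ m ∈ univ \ {i, j}, ∏ m' ∈ (univ \ {i, j}).filter (fun m' => m < m'),
        (ℓij m - ℓij m') ^ 2)
    (Drs : K)
    (hDrs : Drs = (∏ m ∈ univ \ {r, s}, ℓrs m) ^ 2 *
      ∏ m ∈ univ \ {r, s}, ∏ m' ∈ (univ \ {r, s}).filter (fun m' => m < m'),
        (ℓrs m - ℓrs m') ^ 2) :
    Dij ^ 2 = ((ℓir s) ^ (4*g) * (ℓjs i) ^ (4*g)) ^ (2*g+1) * Drs ^ 2 :=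
  symmetric_discriminant_relation_c_general g K α hα d hd i j r s hij his hrs pij hpij ℓij hℓij prs
    hprs ℓrs hℓrs pir hpir ℓir hℓir pjs hpjs ℓjs hℓjs Dij hDij Drs hDrs
end

section
/- Let i, j, k be pairwise distinct indices in {1, …, 2g+2}, let p be any symmetric ratio for (i,j), and let ℓ_{ijk} be the associated symmetric root. Then ℓ_{ijk}^{4g} = ∏_{r ≠ i,j,k} μ_{ijkr}², where the product runs over the 2g−1 indices r ∈ {1, …, 2g+2} different from i, j, k; in particular the 4g-th power of a symmetric root is determined by the μ-invariants and is independent of the choice of symmetric ratio. -/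
open Finset

set_option maxHeartbeats 1000000 in
/-- For pairwise distinct `i, j, k` and any symmetric ratio `p` for `(i,j)`,
the associated symmetric root satisfies `ℓ_{ijk}^{4g} = ∏_{r ≠ i,j,k} μ_{ijkr}²`; in
particular the `4g`-th power of a symmetric root is determined by the μ-invariants and is
independent of the choice of symmetric ratio. -/
theorem symmetric_root_pow_eq_prod_mu
    (g : ℕ) (hg : 1 ≤ g) (K : Type*) [Field K]
    (α : Fin (2*g+2) → K) (hα : Function.Injective α)
    (d : Fin (2*g+2) → K)
    (hd : ∀ m, d m = ∏ n ∈ univ.erase m, (α m - α n))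
    (μ : Fin (2*g+2) → Fin (2*g+2) → Fin (2*g+2) → Fin (2*g+2) → K)
    (hμ : ∀ i j r s, μ i j r s = (α i - α r) * (α j - α s) / ((α i - α s) * (α j - α r)))
    (i j k : Fin (2*g+2)) (hij : i ≠ j) (hik : i ≠ k) (hjk : j ≠ k)
    (p : K) (hp : p ^ (4*g) = (d j / d i) ^ 2)
    (ℓ : Fin (2*g+2) → K)
    (hℓ : ∀ m, ℓ m = p * (α i - α m) / (α j - α m)) :
    (ℓ k) ^ (4*g) = ∏ r ∈ univ \ {i, j, k}, (μ i j k r) ^ 2 := by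
  classical
  set S : Finset (Fin (2*g+2)) := univ \ {i, j, k} with hS
  have hkS : k ∉ S := by simp [hS]
  have hjkS : j ∉ insert k S := by simp [hS, hjk]
  have hikS : i ∉ insert k S := by simp [hS, hik]
  have hAne : α i - α k ≠ 0 := sub_ne_zero.2 fun h => hik (hα h)
  have hBne : α j - α k ≠ 0 := sub_ne_zero.2 fun h => hjk (hα h)
  have hIJne : α i - α j ≠ 0 := sub_ne_zero.2 fun h => hij (hα h)
  have hiS : ∀ r ∈ S, α i - α r ≠ 0 := by
    intro r hr
    simp only [hS, mem_sdiff, mem_insert, mem_singleton] at hr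
    exact sub_ne_zero.2 fun h => hr.2 (Or.inl (hα h).symm)
  have hjS : ∀ r ∈ S, α j - α r ≠ 0 := by
    intro r hr
    simp only [hS, mem_sdiff, mem_insert, mem_singleton] at hr
    exact sub_ne_zero.2 fun h => hr.2 (Or.inr (Or.inl (hα h).symm))
  set Pi := ∏ r ∈ S, (α i - α r) with hPi
  set Pj := ∏ r ∈ S, (α j - α r) with hPj
  have hPine : Pi ≠ 0 := Finset.prod_ne_zero_iff.2 hiS
  have hPjne : Pj ≠ 0 := Finset.prod_ne_zero_iff.2 hjS
  have herasei : univ.erase i = insert j (insert k S) := by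
    ext n
    simp only [mem_erase, mem_univ, and_true, mem_insert, hS, mem_sdiff, mem_singleton]
    constructor
    · intro h
      by_cases h1 : n = j
      · tauto
      by_cases h2 : n = k
      · tauto
      tauto
    · rintro (rfl | rfl | ⟨_, h⟩)
      · exact fun h => hij h.symm
      · exact fun h => hik h.symm
      · tauto
  have herasej : univ.erase j = insert i (insert k S) := by
    ext n
    simp only [mem_erase, mem_univ, and_true, mem_insert, hS, mem_sdiff, mem_singleton]
    constructor
    · intro h
      by_cases h1 : n = i
      · tauto
      by_cases h2 : n = k
      · tauto
      tauto
    · rintro (rfl | rfl | ⟨_, h⟩)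
      · exact hij
      · exact fun h => hjk h.symm
      · tauto
  have hdi : d i = (α i - α j) * ((α i - α k) * Pi) := by
    rw [hd i, herasei, Finset.prod_insert hjkS, Finset.prod_insert hkS]
  have hdj : d j = (α j - α i) * ((α j - α k) * Pj) := by
    rw [hd j, herasej, Finset.prod_insert hikS, Finset.prod_insert hkS]
  have hcard : S.card = 2*g - 1 := by
    have h3 : ({i, j, k} : Finset (Fin (2*g+2))).card = 3 := by
      rw [card_insert_of_notMem (by simp [hij, hik]),
        card_insert_of_notMem (by simp [hjk]), card_singleton]
    rw [hS, card_sdiff_of_subset (subset_univ _), card_univ, Fintype.card_fin, h3]; omega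
  set c := 2*g - 1 with hc
  have h4 : 4*g = 2*c + 2 := by omega
  have hRHS : ∏ r ∈ S, (μ i j k r) ^ 2
      = ((α i - α k) ^ c * Pj) ^ 2 / (Pi * (α j - α k) ^ c) ^ 2 := by
    have step : ∀ r ∈ S, (μ i j k r) ^ 2
        = ((α i - α k) * (α j - α r)) ^ 2 / ((α i - α r) * (α j - α k)) ^ 2 := by
      intro r hr
      rw [hμ, div_pow]
    rw [Finset.prod_congr rfl step, Finset.prod_div_distrib,
      Finset.prod_pow, Finset.prod_pow, Finset.prod_mul_distrib,
      Finset.prod_mul_distrib, Finset.prod_const, Finset.prod_const, hcard]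
  rw [hRHS, hℓ, div_pow, mul_pow, hp, hdi, hdj, h4]
  field_simp
  ring
end

section
/- (Good reduction of symmetric models.) Let v : K → Γ be a valuation. Suppose there exist A, B, C, D ∈ K with AD − BC ≠ 0 and Cα_m + D ≠ 0 for all m, such that the transformed roots β_m := (Aα_m + B)/(Cα_m + D) satisfy: β_r − β_s is a v-unit for all r ≠ s (i.e. the transformed model has unit discriminant). Then for all pairwise distinct indices i, j, k and any symmetric ratio p for (i,j) computed from the α's: (a) ℓ_{ijk}^{4g} is a v-unit (in particular v(ℓ_{ijk}^{4g}) ≤ 1, so the 4g-th powers of the symmetric roots and symmetric coefficients are v-integral), and (b) D_{ij}² is a v-unit (the symmetric model has good reduction at v). -/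
open Finset

private lemma pow_inj_aux {Γ : Type*} [LinearOrderedCommGroupWithZero Γ]
    {x y : Γ} {n : ℕ} (hn : n ≠ 0) (h : x ^ n = y ^ n) : x = y := by
  rcases lt_trichotomy x y with hlt | heq | hgt
  · exact absurd h (ne_of_lt (pow_lt_pow_left₀ hlt zero_le' hn))
  · exact heq
  · exact absurd h.symm (ne_of_lt (pow_lt_pow_left₀ hgt zero_le' hn))

/-- (Good reduction of symmetric models.) Let `v : K → Γ` be a valuation.
Suppose a common Möbius transformation `β m = (a·α m + b)/(c·α m + e)` (with `a·e − b·c ≠ 0`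
and all denominators nonzero) of the roots yields a model with unit discriminant, i.e.
`v (β r − β s) = 1` for all `r ≠ s`. Then for all pairwise distinct `i, j, k` and any
symmetric ratio `p` for `(i,j)`: (a) `ℓ_{ijk}^{4g}` is a `v`-unit, and (b) `D_{ij}²` is a
`v`-unit (the symmetric model has good reduction at `v`). -/
theorem symmetric_model_good_reduction
    (g : ℕ) (hg : 1 ≤ g) (K : Type*) [Field K]
    (Γ : Type*) [LinearOrderedCommGroupWithZero Γ] (v : Valuation K Γ)
    (α : Fin (2*g+2) → K) (hα : Function.Injective α)
    (d : Fin (2*g+2) → K)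
    (hd : ∀ m, d m = ∏ n ∈ univ.erase m, (α m - α n))
    (a b c e : K) (hdet : a*e - b*c ≠ 0) (hden : ∀ m, c * α m + e ≠ 0)
    (β : Fin (2*g+2) → K)
    (hβ : ∀ m, β m = (a * α m + b) / (c * α m + e))
    (hunit : ∀ r s : Fin (2*g+2), r ≠ s → v (β r - β s) = 1)
    (i j k : Fin (2*g+2)) (hij : i ≠ j) (hik : i ≠ k) (hjk : j ≠ k)
    (p : K) (hp : p ^ (4*g) = (d j / d i) ^ 2)
    (ℓ : Fin (2*g+2) → K)
    (hℓ : ∀ m, ℓ m = p * (α i - α m) / (α j - α m))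
    (D : K)
    (hD : D = (∏ m ∈ univ \ {i, j}, ℓ m) ^ 2 *
      ∏ m ∈ univ \ {i, j}, ∏ m' ∈ (univ \ {i, j}).filter (fun m' => m < m'),
        (ℓ m - ℓ m') ^ 2) :
    v ((ℓ k) ^ (4*g)) = 1 ∧ v (D ^ 2) = 1 := by
  have hαne : ∀ r s : Fin (2*g+2), r ≠ s → α r - α s ≠ 0 := fun r s h =>
    sub_ne_zero.2 (fun hh => h (hα hh))
  set w : Fin (2*g+2) → Γ := fun m => v (c * α m + e) with hw
  set t : Γ := v (a*e - b*c) with ht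
  have ht0 : t ≠ 0 := by simpa [ht] using hdet
  have hw0 : ∀ m, w m ≠ 0 := fun m => by simpa [hw] using hden m
  -- key valuation identity
  have hE : ∀ r s : Fin (2*g+2), r ≠ s → t * v (α r - α s) = w r * w s := by
    intro r s hrs
    have h1 := hden r
    have h2 := hden s
    have hid : (a*e - b*c) * (α r - α s) = (β r - β s) * ((c * α r + e) * (c * α s + e)) := by
      rw [hβ r, hβ s]; field_simp; ring
    have hv := congrArg v hid
    rw [v.map_mul, v.map_mul, v.map_mul, hunit r s hrs, one_mul] at hv
    exact hv
  have hd0 : ∀ m, d m ≠ 0 := by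
    intro m
    rw [hd m]
    exact prod_ne_zero_iff.2 fun n hn => hαne m n (fun h => (mem_erase.1 hn).1 h.symm)
  have hdval : ∀ m, t ^ (2*g+1) * v (d m) = w m ^ (2*g) * ∏ n, w n := by
    intro m
    rw [hd m, map_prod]
    have hcard : (univ.erase m).card = 2*g+1 := by
      rw [card_erase_of_mem (mem_univ m), card_univ, Fintype.card_fin]; omega
    calc t ^ (2*g+1) * ∏ n ∈ univ.erase m, v (α m - α n)
        = ∏ n ∈ univ.erase m, (t * v (α m - α n)) := by
          rw [prod_mul_distrib, prod_const, hcard]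
      _ = ∏ n ∈ univ.erase m, (w m * w n) := by
          refine prod_congr rfl fun n hn => hE m n fun h => (mem_erase.1 hn).1 h.symm
      _ = w m ^ (2*g+1) * ∏ n ∈ univ.erase m, w n := by
          rw [prod_mul_distrib, prod_const, hcard]
      _ = w m ^ (2*g) * ∏ n, w n := by
          rw [← mul_prod_erase univ w (mem_univ m), pow_succ, mul_assoc]
  -- p valuation
  have hexp : 2*g*2 = 4*g := by omega
  have hpw : v p * w i = w j := by
    apply pow_inj_aux (n := 4*g) (by omega)
    have hpdi : p ^ (4*g) * (d i) ^ 2 = (d j) ^ 2 := by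
      rw [hp, div_pow, div_mul_cancel₀ _ (pow_ne_zero 2 (hd0 i))]
    have hv := congrArg v hpdi
    rw [v.map_mul, v.map_pow, v.map_pow, v.map_pow] at hv
    have key : (v p) ^ (4*g) * (w i ^ (2*g) * ∏ n, w n) ^ 2 = (w j ^ (2*g) * ∏ n, w n) ^ 2 := by
      rw [← hdval i, ← hdval j, mul_pow, mul_pow (t ^ (2*g+1)), mul_left_comm, hv]
    have hW : (∏ n, w n) ≠ 0 := prod_ne_zero_iff.2 fun n _ => hw0 n
    have key2 : (v p) ^ (4*g) * (w i ^ (2*g)) ^ 2 = (w j ^ (2*g)) ^ 2 := by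
      apply mul_right_cancel₀ (pow_ne_zero 2 hW)
      calc (v p) ^ (4*g) * (w i ^ (2*g)) ^ 2 * (∏ n, w n) ^ 2
          = (v p) ^ (4*g) * (w i ^ (2*g) * ∏ n, w n) ^ 2 := by rw [mul_pow, mul_assoc]
        _ = (w j ^ (2*g) * ∏ n, w n) ^ 2 := key
        _ = (w j ^ (2*g)) ^ 2 * (∏ n, w n) ^ 2 := by rw [mul_pow]
    calc (v p * w i) ^ (4*g) = (v p) ^ (4*g) * (w i ^ (2*g)) ^ 2 := by
          rw [mul_pow, ← pow_mul, hexp]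
      _ = (w j ^ (2*g)) ^ 2 := key2
      _ = w j ^ (4*g) := by rw [← pow_mul, hexp]
  -- symmetric roots are units
  have hℓval : ∀ m, m ≠ i → m ≠ j → v (ℓ m) = 1 := by
    intro m hmi hmj
    have hjm := hαne j m (Ne.symm hmj)
    have hid : ℓ m * (α j - α m) = p * (α i - α m) := by
      rw [hℓ m]; field_simp
    have hv := congrArg v hid
    rw [v.map_mul, v.map_mul] at hv
    have hv2 : v (ℓ m) * (w j * w m) = v p * (w i * w m) := by
      rw [← hE j m (Ne.symm hmj), ← hE i m (Ne.symm hmi)]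
      calc v (ℓ m) * (t * v (α j - α m)) = t * (v (ℓ m) * v (α j - α m)) := by
            rw [mul_left_comm]
        _ = t * (v p * v (α i - α m)) := by rw [hv]
        _ = v p * (t * v (α i - α m)) := by rw [mul_left_comm]
    apply mul_right_cancel₀ (hw0 j)
    rw [one_mul]
    apply mul_right_cancel₀ (hw0 m)
    calc v (ℓ m) * w j * w m = v (ℓ m) * (w j * w m) := by rw [mul_assoc]
      _ = v p * (w i * w m) := hv2
      _ = (v p * w i) * w m := by rw [mul_assoc]
      _ = w j * w m := by rw [hpw]
  have hdiffval : ∀ m m', m ≠ i → m ≠ j → m' ≠ i → m' ≠ j → m ≠ m' → v (ℓ m - ℓ m') = 1 := by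
    intro m m' hmi hmj hmi' hmj' hmm
    have h1 := hαne j m (Ne.symm hmj)
    have h2 := hαne j m' (Ne.symm hmj')
    have hid : (ℓ m - ℓ m') * ((α j - α m) * (α j - α m')) =
        p * ((α i - α j) * (α m - α m')) := by
      rw [hℓ m, hℓ m']; field_simp; ring
    have hv := congrArg v hid
    rw [v.map_mul, v.map_mul, v.map_mul, v.map_mul] at hv
    have hv2 : v (ℓ m - ℓ m') * ((w j * w m) * (w j * w m')) =
        v p * ((w i * w j) * (w m * w m')) := by
      rw [← hE j m (Ne.symm hmj), ← hE j m' (Ne.symm hmj'), ← hE i j hij, ← hE m m' hmm]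
      calc v (ℓ m - ℓ m') * ((t * v (α j - α m)) * (t * v (α j - α m')))
          = (t * t) * (v (ℓ m - ℓ m') * (v (α j - α m) * v (α j - α m'))) := by ac_rfl
        _ = (t * t) * (v p * (v (α i - α j) * v (α m - α m'))) := by rw [hv]
        _ = v p * ((t * v (α i - α j)) * (t * v (α m - α m'))) := by ac_rfl
    apply mul_right_cancel₀ (hw0 j)
    rw [one_mul]
    apply mul_right_cancel₀ (hw0 m)
    apply mul_right_cancel₀ (hw0 m')
    apply mul_right_cancel₀ (hw0 j)
    calc v (ℓ m - ℓ m') * w j * w m * w m' * w j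
        = v (ℓ m - ℓ m') * ((w j * w m) * (w j * w m')) := by ac_rfl
      _ = v p * ((w i * w j) * (w m * w m')) := hv2
      _ = (v p * w i) * (w j * (w m * w m')) := by ac_rfl
      _ = w j * (w j * (w m * w m')) := by rw [hpw]
      _ = w j * w m * w m' * w j := by ac_rfl
  have hmemS : ∀ m : Fin (2*g+2), m ∈ univ \ ({i, j} : Finset (Fin (2*g+2))) → m ≠ i ∧ m ≠ j := by
    intro m hm
    simp only [mem_sdiff, mem_univ, true_and, mem_insert, mem_singleton, not_or] at hm
    exact hm
  constructor
  · rw [v.map_pow, hℓval k (Ne.symm hik) (Ne.symm hjk), one_pow]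
  · rw [hD, v.map_pow, v.map_mul, v.map_pow, map_prod]
    have h1 : ∏ m ∈ univ \ ({i, j} : Finset (Fin (2*g+2))), v (ℓ m) = 1 := by
      apply prod_eq_one
      intro m hm
      exact hℓval m (hmemS m hm).1 (hmemS m hm).2
    have h2 : v (∏ m ∈ univ \ ({i, j} : Finset (Fin (2*g+2))),
        ∏ m' ∈ (univ \ ({i, j} : Finset (Fin (2*g+2)))).filter (fun m' => m < m'),
          (ℓ m - ℓ m') ^ 2) = 1 := by
      rw [map_prod]
      apply prod_eq_one
      intro m hm
      rw [map_prod]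
      apply prod_eq_one
      intro m' hm'
      rw [mem_filter] at hm'
      rw [v.map_pow, hdiffval m m' (hmemS m hm).1 (hmemS m hm).2
        (hmemS m' hm'.1).1 (hmemS m' hm'.1).2 (ne_of_lt hm'.2), one_pow]
    rw [h1, h2, one_pow, one_mul, one_pow]
end

section
/- (Criterion for failure of potentially good reduction.) Let v : K → Γ be a valuation. Suppose that for some distinct indices i, j and some symmetric ratio p for (i,j) the associated symmetric discriminant satisfies v(D_{ij}²) > 1, i.e. D_{ij} has negative valuation when v is written additively. Then there exist no elements A, B, C, D ∈ K with AD − BC ≠ 0 and Cα_m + D ≠ 0 for all m such that the transformed roots β_m := (Aα_m + B)/(Cα_m + D) have all pairwise differences β_r − β_s (r ≠ s) equal to v-units; that is, the curve Y² = f(X) cannot acquire a model with unit discriminant by a Möbius transformation of its roots over K. -/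
open Finset

/-- (Criterion for failure of potentially good reduction.) Let `v : K → Γ` be
a valuation. If for some distinct `i, j` and some symmetric ratio `p` for `(i,j)` the
symmetric discriminant satisfies `v (D_{ij}²) > 1`, then there is no Möbius transformation
`β m = (a·α m + b)/(c·α m + e)` (with `a·e − b·c ≠ 0` and all denominators nonzero) of the
roots such that all pairwise differences `β r − β s` (`r ≠ s`) are `v`-units. -/
theorem no_potentially_good_reduction_of_discriminant
    (g : ℕ) (hg : 1 ≤ g) (K : Type*) [Field K]
    (Γ : Type*) [LinearOrderedCommGroupWithZero Γ] (v : Valuation K Γ)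
    (α : Fin (2*g+2) → K) (hα : Function.Injective α)
    (d : Fin (2*g+2) → K)
    (hd : ∀ m, d m = ∏ n ∈ univ.erase m, (α m - α n))
    (i j : Fin (2*g+2)) (hij : i ≠ j)
    (p : K) (hp : p ^ (4*g) = (d j / d i) ^ 2)
    (ℓ : Fin (2*g+2) → K)
    (hℓ : ∀ m, ℓ m = p * (α i - α m) / (α j - α m))
    (D : K)
    (hD : D = (∏ m ∈ univ \ {i, j}, ℓ m) ^ 2 *
      ∏ m ∈ univ \ {i, j}, ∏ m' ∈ (univ \ {i, j}).filter (fun m' => m < m'),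
        (ℓ m - ℓ m') ^ 2)
    (hbad : 1 < v (D ^ 2)) :
    ¬ ∃ a b c e : K, (a*e - b*c ≠ 0) ∧ (∀ m, c * α m + e ≠ 0) ∧
      (∀ r s : Fin (2*g+2), r ≠ s →
        v ((a * α r + b) / (c * α r + e) - (a * α s + b) / (c * α s + e)) = 1) := by
  rintro ⟨a, b, c, e, hdet, hden, hunit⟩
  have hαne : ∀ r s : Fin (2*g+2), r ≠ s → α r - α s ≠ 0 := fun r s h =>
    sub_ne_zero.2 fun hh => h (hα hh)
  set W : Fin (2*g+2) → Γ := fun m => v (c * α m + e) with hW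
  set δ : Γ := v (a*e - b*c) with hδ
  have hδ0 : δ ≠ 0 := v.ne_zero_iff.mpr hdet
  have hW0 : ∀ m, W m ≠ 0 := fun m => v.ne_zero_iff.mpr (hden m)
  -- key multiplicative relation
  have key : ∀ r s : Fin (2*g+2), r ≠ s → v (α r - α s) * δ = W r * W s := by
    intro r s hrs
    have h1 : (a*e - b*c) * (α r - α s) =
        ((a * α r + b) / (c * α r + e) - (a * α s + b) / (c * α s + e)) *
          ((c * α r + e) * (c * α s + e)) := by
      field_simp [hden r, hden s]
      ring
    have h2 := congrArg v h1
    rw [map_mul, map_mul, map_mul, hunit r s hrs, one_mul] at h2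
    rw [mul_comm] at h2
    exact h2
  -- valuation of d m
  have hcard : ∀ m : Fin (2*g+2), (univ.erase m).card = 2*g+1 := by
    intro m
    rw [card_erase_of_mem (mem_univ m), card_univ, Fintype.card_fin]
    omega
  have hdval : ∀ m : Fin (2*g+2), v (d m) * δ ^ (2*g+1) =
      W m ^ (2*g+1) * ∏ n ∈ univ.erase m, W n := by
    intro m
    calc v (d m) * δ ^ (2*g+1)
        = (∏ n ∈ univ.erase m, v (α m - α n)) * ∏ n ∈ univ.erase m, δ := by
          rw [hd m, map_prod, prod_const, hcard]
      _ = ∏ n ∈ univ.erase m, (v (α m - α n) * δ) := by rw [prod_mul_distrib]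
      _ = ∏ n ∈ univ.erase m, (W m * W n) := by
          refine prod_congr rfl fun n hn => key m n (ne_of_mem_erase hn).symm
      _ = W m ^ (2*g+1) * ∏ n ∈ univ.erase m, W n := by
          rw [prod_mul_distrib, prod_const, hcard]
  have hd0 : ∀ m, v (d m) ≠ 0 := by
    intro m
    rw [hd m, Valuation.ne_zero_iff]
    exact prod_ne_zero_iff.2 fun n hn => hαne m n (ne_of_mem_erase hn).symm
  -- v (d j) * W i ^ (2g) = v (d i) * W j ^ (2g)
  have hP : W i * ∏ n ∈ univ.erase i, W n = W j * ∏ n ∈ univ.erase j, W n := by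
    rw [mul_prod_erase univ W (mem_univ i), mul_prod_erase univ W (mem_univ j)]
  have hdij : v (d j) * W i ^ (2*g) = v (d i) * W j ^ (2*g) := by
    have h1 := hdval i
    have h2 := hdval j
    have hcancel : (v (d j) * W i ^ (2*g)) * (δ ^ (2*g+1) * (W i * W j)) =
        (v (d i) * W j ^ (2*g)) * (δ ^ (2*g+1) * (W i * W j)) := by
      calc (v (d j) * W i ^ (2*g)) * (δ ^ (2*g+1) * (W i * W j))
          = (v (d j) * δ ^ (2*g+1)) * ((W i ^ (2*g) * W i) * W j) := by ac_rfl
        _ = (W j ^ (2*g+1) * ∏ n ∈ univ.erase j, W n) * ((W i ^ (2*g) * W i) * W j) := by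
            rw [h2]
        _ = (W j ^ (2*g+1) * ∏ n ∈ univ.erase j, W n) * (W i ^ (2*g+1) * W j) := by
            rw [← pow_succ]
        _ = (W i ^ (2*g+1) * W j ^ (2*g+1)) * (W j * ∏ n ∈ univ.erase j, W n) := by
            ac_rfl
        _ = (W i ^ (2*g+1) * W j ^ (2*g+1)) * (W i * ∏ n ∈ univ.erase i, W n) := by
            rw [hP]
        _ = (W i ^ (2*g+1) * ∏ n ∈ univ.erase i, W n) * (W j ^ (2*g+1) * W i) := by
            ac_rfl
        _ = (v (d i) * δ ^ (2*g+1)) * (W j ^ (2*g+1) * W i) := by rw [h1]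
        _ = (v (d i) * δ ^ (2*g+1)) * ((W j ^ (2*g) * W j) * W i) := by
            rw [pow_succ (W j) (2*g)]
        _ = (v (d i) * W j ^ (2*g)) * (δ ^ (2*g+1) * (W i * W j)) := by ac_rfl
    exact mul_right_cancel₀
      (mul_ne_zero (pow_ne_zero _ hδ0) (mul_ne_zero (hW0 i) (hW0 j))) hcancel
  -- p is nonzero
  have hp0 : p ≠ 0 := by
    intro h0
    rw [h0, zero_pow (by omega : 4*g ≠ 0)] at hp
    have hne : d j / d i ≠ 0 := div_ne_zero
      ((Valuation.ne_zero_iff v).1 (hd0 j)) ((Valuation.ne_zero_iff v).1 (hd0 i))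
    exact hne (pow_eq_zero_iff (n := 2) (by norm_num) |>.1 hp.symm)
  have hvp0 : v p ≠ 0 := v.ne_zero_iff.mpr hp0
  -- v p * W i = W j
  have hvp : v p * W i = W j := by
    have h1 : (v p) ^ (4*g) * (v (d i)) ^ 2 = (v (d j)) ^ 2 := by
      have hv := congrArg v hp
      rw [map_pow, map_pow, map_div₀] at hv
      rw [hv, div_pow, div_mul_cancel₀]
      exact pow_ne_zero _ (hd0 i)
    have hexp : 2*g*2 = 4*g := by ring
    have h2 : (v p * W i) ^ (4*g) = W j ^ (4*g) := by
      have h4 : (v p * W i) ^ (4*g) * (v (d i)) ^ 2 = W j ^ (4*g) * (v (d i)) ^ 2 := by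
        calc (v p * W i) ^ (4*g) * (v (d i)) ^ 2
            = ((v p) ^ (4*g) * (v (d i)) ^ 2) * W i ^ (4*g) := by rw [mul_pow]; ac_rfl
          _ = (v (d j)) ^ 2 * W i ^ (4*g) := by rw [h1]
          _ = (v (d j) * W i ^ (2*g)) ^ 2 := by rw [mul_pow, ← pow_mul, hexp]
          _ = (v (d i) * W j ^ (2*g)) ^ 2 := by rw [hdij]
          _ = W j ^ (4*g) * (v (d i)) ^ 2 := by
              rw [mul_pow, ← pow_mul, hexp, mul_comm]
      exact mul_right_cancel₀ (pow_ne_zero _ (hd0 i)) h4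
    exact (pow_left_inj₀ zero_le' zero_le' (by omega : 4*g ≠ 0)).1 h2
  -- each symmetric root is a unit
  have hmem : ∀ m : Fin (2*g+2), m ∈ univ \ ({i, j} : Finset _) → m ≠ i ∧ m ≠ j := by
    intro m hm
    simp only [mem_sdiff, mem_univ, mem_insert, mem_singleton, true_and] at hm
    push_neg at hm
    exact hm
  have hℓunit : ∀ m : Fin (2*g+2), m ≠ i → m ≠ j → v (ℓ m) = 1 := by
    intro m hmi hmj
    have hid : ℓ m * (α j - α m) = p * (α i - α m) := by
      rw [hℓ m, div_mul_cancel₀]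
      exact hαne j m (Ne.symm hmj)
    have h2 := congrArg v hid
    rw [map_mul, map_mul] at h2
    have h3 : v (ℓ m) * (v (α j - α m) * δ) = v p * (v (α i - α m) * δ) := by
      rw [← mul_assoc, h2, mul_assoc]
    rw [key j m (Ne.symm hmj), key i m (Ne.symm hmi)] at h3
    have h4 : v (ℓ m) * (W j * W m) = 1 * (W j * W m) := by
      rw [h3, one_mul, ← mul_assoc, hvp]
    exact mul_right_cancel₀ (mul_ne_zero (hW0 j) (hW0 m)) h4
  -- differences of symmetric roots are units
  have hdiffunit : ∀ m m' : Fin (2*g+2), m ≠ i → m ≠ j → m' ≠ i → m' ≠ j → m ≠ m' →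
      v (ℓ m - ℓ m') = 1 := by
    intro m m' hmi hmj hmi' hmj' hmm'
    have hjm := hαne j m (Ne.symm hmj)
    have hjm' := hαne j m' (Ne.symm hmj')
    have hid : (ℓ m - ℓ m') * ((α j - α m) * (α j - α m')) =
        p * (α i - α j) * (α m - α m') := by
      rw [hℓ m, hℓ m']
      field_simp
      ring
    have h2 := congrArg v hid
    rw [map_mul, map_mul, map_mul, map_mul] at h2
    have h3 : v (ℓ m - ℓ m') * ((v (α j - α m) * δ) * (v (α j - α m') * δ)) =
        v p * ((v (α i - α j) * δ) * (v (α m - α m') * δ)) := by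
      calc v (ℓ m - ℓ m') * ((v (α j - α m) * δ) * (v (α j - α m') * δ))
          = (v (ℓ m - ℓ m') * (v (α j - α m) * v (α j - α m'))) * (δ * δ) := by ac_rfl
        _ = (v p * v (α i - α j) * v (α m - α m')) * (δ * δ) := by rw [h2]
        _ = v p * ((v (α i - α j) * δ) * (v (α m - α m') * δ)) := by ac_rfl
    rw [key j m (Ne.symm hmj), key j m' (Ne.symm hmj'), key i j hij, key m m' hmm'] at h3
    have h4 : v (ℓ m - ℓ m') * ((W j * W m) * (W j * W m')) =
        1 * ((W j * W m) * (W j * W m')) := by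
      rw [h3, one_mul]
      calc v p * ((W i * W j) * (W m * W m'))
          = (v p * W i) * (W j * (W m * W m')) := by ac_rfl
        _ = W j * (W j * (W m * W m')) := by rw [hvp]
        _ = (W j * W m) * (W j * W m') := by ac_rfl
    exact mul_right_cancel₀
      (mul_ne_zero (mul_ne_zero (hW0 j) (hW0 m)) (mul_ne_zero (hW0 j) (hW0 m'))) h4
  -- v D = 1
  have hvD : v D = 1 := by
    rw [hD, map_mul, map_pow, map_prod, map_prod]
    have e1 : ∏ m ∈ univ \ ({i, j} : Finset _), v (ℓ m) = 1 :=
      prod_eq_one fun m hm => hℓunit m (hmem m hm).1 (hmem m hm).2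
    have e2 : ∏ m ∈ univ \ ({i, j} : Finset _),
        v (∏ m' ∈ (univ \ ({i, j} : Finset _)).filter (fun m' => m < m'), (ℓ m - ℓ m') ^ 2)
        = 1 := by
      refine prod_eq_one fun m hm => ?_
      rw [map_prod]
      refine prod_eq_one fun m' hm' => ?_
      have hm'2 := mem_filter.1 hm'
      have h1 := hmem m hm
      have h2 := hmem m' hm'2.1
      rw [map_pow, hdiffunit m m' h1.1 h1.2 h2.1 h2.2 (ne_of_lt hm'2.2), one_pow]
    rw [e1, e2, one_pow, one_mul]
  rw [map_pow, hvD, one_pow] at hbad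
  exact lt_irrefl 1 hbad
end
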